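/- arXiv:2112.08678 — 7 statements merged into one kernel-verified Lean document; each statement's English description precedes it below -/
import Mathlib

section
/- Let a and b be complex-valued sequences of length N, and define c and d by c_k = conj(b_{N−1−k}) and d_k = −conj(a_{N−1−k}) for 0 ≤ k ≤ N−1. Then for every shift 0 ≤ τ ≤ N−1, C_{c,d}(τ) = −C_{a,b}(τ); in particular C_{a,b}(τ) + C_{c,d}(τ) = 0. -/
open Finset

/-- Aperiodic cross-correlation of length-`L` complex sequences at shift `0 ≤ τ`. -/
noncomputable def aCorr (a b : ℕ → ℂ) (L τ : ℕ) : ℂ :=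
  ∑ k ∈ Finset.range (L - τ), a k * (starRingEnd ℂ) (b (k + τ))

/-- Periodic cross-correlation of length-`L` complex sequences at shift `τ`. -/
noncomputable def pCorr (a b : ℕ → ℂ) (L τ : ℕ) : ℂ :=
  ∑ k ∈ Finset.range L, a k * (starRingEnd ℂ) (b ((k + τ) % L))

theorem statement1 (N : ℕ) (a b c d : ℕ → ℂ)
    (hc : ∀ k, c k = (starRingEnd ℂ) (b (N - 1 - k)))
    (hd : ∀ k, d k = -(starRingEnd ℂ) (a (N - 1 - k)))
    (τ : ℕ) (hτ : τ ≤ N - 1) :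
    aCorr c d N τ = -aCorr a b N τ ∧ aCorr a b N τ + aCorr c d N τ = 0 := by
  have key : aCorr c d N τ = -aCorr a b N τ := by
    unfold aCorr
    rw [← Finset.sum_range_reflect (fun j => a j * (starRingEnd ℂ) (b (j + τ))) (N - τ),
      ← Finset.sum_neg_distrib]
    apply Finset.sum_congr rfl
    intro k hk
    rw [Finset.mem_range] at hk
    rw [hc, hd]
    have h1 : N - 1 - (k + τ) = N - τ - 1 - k := by omega
    have h2 : N - 1 - k = N - τ - 1 - k + τ := by omega
    rw [h1, h2]
    simp only [map_neg, Complex.conj_conj]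
    ring
  exact ⟨key, by rw [key]; ring⟩
end

section
/- Let (a,b) be a Golay complementary pair of length N, let (c,d) be its standard Golay complementary mate (c_k = conj(b_{N−1−k}), d_k = −conj(a_{N−1−k})), let x1,x2,x3,x4 ∈ {+1,−1} with x1·x2 + x3·x4 = 0, and define the length-4N sequences p = x1·a ∥ x2·b ∥ x3·a ∥ x4·b and q = x1·c ∥ x2·d ∥ x3·c ∥ x4·d. Then (p,q) is a (2, 4N, N)-Golay-ZCZ sequence pair; that is: (C1) C_p(τ) + C_q(τ) = 0 for all 1 ≤ τ ≤ 4N−1; (C2) R_p(τ) = 0 and R_q(τ) = 0 for all 1 ≤ τ ≤ N; (C3) R_{p,q}(τ) = 0 for all 0 ≤ τ ≤ N. -/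
open Finset

/-- The length-`4N` sequence `x1·a ∥ x2·b ∥ x3·a ∥ x4·b`. -/
noncomputable def quadConcat (N : ℕ) (x1 x2 x3 x4 : ℂ) (a b : ℕ → ℂ) : ℕ → ℂ :=
  fun n =>
    if n < N then x1 * a n
    else if n < 2 * N then x2 * b (n - N)
    else if n < 3 * N then x3 * a (n - 2 * N)
    else x4 * b (n - 3 * N)

/-!
Write `p` and `q` as sequences of four blocks of length `N`. For a shift `τ = m N + r` with
`r ≤ N`, the aperiodic correlation of two block sequences is a sum of block correlations: blocks
at distance `m` contribute their correlation at shift `r`, blocks at distance `m + 1` their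
correlation at the negative shift `r - N`. The mate consists of conjugate reversals of `b` and
`-a`, so `C_c = C_b`, `C_d = C_a`, `C_{c,d} = -C_{a,b}` and `C_{a,c} + C_{b,d} = 0`. Together with
the sign relations `x1 x3 + x2 x4 = x2 x3 + x1 x4 = 0`, consequences of `x1 x2 + x3 x4 = 0`, all
block contributions cancel. Periodic correlations reduce to aperiodic ones through
`R_{u,v}(τ) = C_{u,v}(τ) + conj C_{v,u}(L - τ)`.
-/

open ComplexConjugate

section Correlation

variable {u v u' v' : ℕ → ℂ} {L τ : ℕ}

theorem aCorr_congr (hu : ∀ k < L, u k = u' k) (hv : ∀ k < L, v k = v' k) :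
    aCorr u v L τ = aCorr u' v' L τ :=
  sum_congr rfl fun k hk => by
    rw [mem_range] at hk
    rw [hu k (by omega), hv (k + τ) (by omega)]

@[simp]
theorem aCorr_smul (x y : ℂ) : aCorr (x • u) (y • v) L τ = x * conj y * aCorr u v L τ := by
  simp only [aCorr, mul_sum, Pi.smul_apply, smul_eq_mul, map_mul]
  exact sum_congr rfl fun _ _ => by ring

@[simp]
theorem aCorr_neg_left : aCorr (-u) v L τ = -aCorr u v L τ := by
  simp [aCorr]

@[simp]
theorem aCorr_neg_right : aCorr u (-v) L τ = -aCorr u v L τ := by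
  simp [aCorr]

@[simp]
theorem aCorr_zero_left : aCorr 0 v L τ = 0 := by
  simp [aCorr]

@[simp]
theorem aCorr_zero_right : aCorr u 0 L τ = 0 := by
  simp [aCorr]

theorem aCorr_of_le (h : L ≤ τ) : aCorr u v L τ = 0 := by
  simp [aCorr, Nat.sub_eq_zero_of_le h]

theorem aCorr_eq_sum_range (hv : ∀ l, L ≤ l → v l = 0) :
    aCorr u v L τ = ∑ k ∈ range L, u k * conj (v (k + τ)) := by
  refine sum_subset (range_subset_range.2 (Nat.sub_le L τ)) fun k _ hk => ?_
  rw [mem_range, not_lt] at hk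
  rw [hv (k + τ) (by omega), map_zero, mul_zero]

theorem pCorr_eq_aCorr_add_conj_aCorr (h : τ ≤ L) :
    pCorr u v L τ = aCorr u v L τ + conj (aCorr v u L (L - τ)) := by
  obtain ⟨s, rfl⟩ : ∃ s, L = s + τ := ⟨L - τ, by omega⟩
  rw [pCorr, sum_range_add, aCorr, aCorr, Nat.add_sub_cancel, Nat.add_sub_cancel_left, map_sum]
  congr 1
  · refine sum_congr rfl fun k hk => ?_
    rw [mem_range] at hk
    rw [Nat.mod_eq_of_lt (by omega)]
  · refine sum_congr rfl fun k hk => ?_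
    rw [mem_range] at hk
    rw [show s + k + τ = k + (s + τ) by omega, Nat.add_mod_right, Nat.mod_eq_of_lt (by omega),
      map_mul, Complex.conj_conj, mul_comm, add_comm k s]

end Correlation

theorem sum_range_mul {β : Type*} [AddCommMonoid β] {M N : ℕ} (f : ℕ → β) :
    ∑ n ∈ range (M * N), f n = ∑ j ∈ range M, ∑ i ∈ range N, f (j * N + i) := by
  induction M with
  | zero => simp
  | succ M ih => rw [Nat.succ_mul, sum_range_add, ih, sum_range_succ]

def blockSeq (N : ℕ) (U : ℕ → ℕ → ℂ) (n : ℕ) : ℂ := U (n / N) (n % N)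

theorem blockSeq_mul_add {N j i : ℕ} (U : ℕ → ℕ → ℂ) (hi : i < N) :
    blockSeq N U (j * N + i) = U j i := by
  rw [blockSeq, Nat.mul_comm, Nat.mul_add_div (by omega), Nat.div_eq_of_lt hi, Nat.add_zero,
    Nat.mul_add_mod, Nat.mod_eq_of_lt hi]

/-- `conj (aCorr v u N (N - r))` is the correlation of `u` and `v` at the negative shift `r - N`. -/
theorem aCorr_blockSeq {M N m r : ℕ} (U V : ℕ → ℕ → ℂ) (hV : ∀ j, M ≤ j → V j = 0)
    (hr : r ≤ N) :
    aCorr (blockSeq N U) (blockSeq N V) (M * N) (m * N + r) =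
      ∑ j ∈ range M,
        (aCorr (U j) (V (j + m)) N r + conj (aCorr (V (j + m + 1)) (U j) N (N - r))) := by
  obtain ⟨s, rfl⟩ : ∃ s, N = s + r := ⟨N - r, by omega⟩
  rcases Nat.eq_zero_or_pos (s + r) with hN | hN
  · simp [aCorr, hN]
  have hvanish : ∀ l, M * (s + r) ≤ l → blockSeq (s + r) V l = 0 := fun l hl => by
    rw [blockSeq, hV _ ((Nat.le_div_iff_mul_le hN).2 hl), Pi.zero_apply]
  rw [aCorr_eq_sum_range hvanish, sum_range_mul]
  refine sum_congr rfl fun j _ => ?_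
  rw [sum_range_add, aCorr, aCorr, Nat.add_sub_cancel, Nat.add_sub_cancel_left, map_sum]
  congr 1
  · refine sum_congr rfl fun i hi => ?_
    rw [mem_range] at hi
    rw [blockSeq_mul_add U (by omega), show j * (s + r) + i + (m * (s + r) + r) =
      (j + m) * (s + r) + (i + r) by ring, blockSeq_mul_add V (by omega)]
  · refine sum_congr rfl fun t ht => ?_
    rw [mem_range] at ht
    rw [blockSeq_mul_add U (by omega), show j * (s + r) + (s + t) + (m * (s + r) + r) =
      (j + m + 1) * (s + r) + t by ring, blockSeq_mul_add V (by omega), map_mul,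
      Complex.conj_conj, mul_comm, add_comm t s]

def quadBlocks (x1 x2 x3 x4 : ℂ) (a b : ℕ → ℂ) : ℕ → ℕ → ℂ
  | 0 => x1 • a
  | 1 => x2 • b
  | 2 => x3 • a
  | 3 => x4 • b
  | _ => 0

section QuadConcat

variable {N : ℕ} {x1 x2 x3 x4 y1 y2 y3 y4 : ℂ} {a b e f : ℕ → ℂ}

theorem quadConcat_eq_blockSeq {n : ℕ} (hn : n < 4 * N) :
    quadConcat N x1 x2 x3 x4 a b n = blockSeq N (quadBlocks x1 x2 x3 x4 a b) n := by
  obtain ⟨j, i, hi, rfl⟩ : ∃ j i, i < N ∧ n = j * N + i :=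
    ⟨n / N, n % N, Nat.mod_lt n (by omega), (Nat.div_add_mod' n N).symm⟩
  have hj : j < 4 := by nlinarith
  rw [blockSeq_mul_add _ hi, quadConcat]
  interval_cases j <;> simp only [quadBlocks, Pi.smul_apply, smul_eq_mul] <;>
    split_ifs <;> grind

theorem aCorr_quadConcat {τ m r : ℕ} (hτ : τ = m * N + r) (hr : r ≤ N) :
    aCorr (quadConcat N x1 x2 x3 x4 a b) (quadConcat N y1 y2 y3 y4 e f) (4 * N) τ =
      ∑ j ∈ range 4,
        (aCorr (quadBlocks x1 x2 x3 x4 a b j) (quadBlocks y1 y2 y3 y4 e f (j + m)) N r +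
          conj (aCorr (quadBlocks y1 y2 y3 y4 e f (j + m + 1)) (quadBlocks x1 x2 x3 x4 a b j) N
            (N - r))) := by
  rw [aCorr_congr (fun _ hk => quadConcat_eq_blockSeq hk) (fun _ hk => quadConcat_eq_blockSeq hk),
    hτ, aCorr_blockSeq _ _ (fun j hj => ?_) hr]
  match j, hj with
  | j + 4, _ => rfl

end QuadConcat

def conjReverse (N : ℕ) (u : ℕ → ℂ) (k : ℕ) : ℂ := conj (u (N - 1 - k))

section ConjReverse

variable {N τ : ℕ} {u v : ℕ → ℂ}

@[simp]
theorem aCorr_conjReverse : aCorr (conjReverse N u) (conjReverse N v) N τ = aCorr v u N τ := by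
  rw [aCorr, aCorr, ← sum_range_reflect]
  refine sum_congr rfl fun k hk => ?_
  rw [mem_range] at hk
  rw [conjReverse, conjReverse, Complex.conj_conj, show N - 1 - (N - τ - 1 - k) = k + τ by omega,
    show N - 1 - (N - τ - 1 - k + τ) = k by omega, mul_comm]

theorem aCorr_conjReverse_right_comm :
    aCorr u (conjReverse N v) N τ = aCorr v (conjReverse N u) N τ := by
  rw [aCorr, aCorr, ← sum_range_reflect]
  refine sum_congr rfl fun k hk => ?_
  rw [mem_range] at hk
  rw [conjReverse, conjReverse, Complex.conj_conj, Complex.conj_conj,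
    show N - 1 - (N - τ - 1 - k + τ) = k by omega,
    show N - 1 - (k + τ) = N - τ - 1 - k by omega, mul_comm]

end ConjReverse

-- Shifts `τ ≥ N` are harmless: there both correlations are empty sums.
def IsGolayPair (N : ℕ) (a b : ℕ → ℂ) : Prop :=
  ∀ τ, 0 < τ → aCorr a a N τ + aCorr b b N τ = 0

theorem IsGolayPair.mate {N : ℕ} {a b : ℕ → ℂ} (h : IsGolayPair N a b) :
    IsGolayPair N (conjReverse N b) (-conjReverse N a) := fun τ hτ => by
  simpa [add_comm] using h τ hτ

section Signs

variable {x1 x2 x3 x4 : ℂ}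

theorem conj_of_sign {x : ℂ} (h : x = 1 ∨ x = -1) : conj x = x := by
  rcases h with rfl | rfl <;> simp

theorem mul_self_of_sign {x : ℂ} (h : x = 1 ∨ x = -1) : x * x = 1 := by
  rcases h with rfl | rfl <;> norm_num

theorem mul_add_mul_swap_eq_zero (h2 : x2 * x2 = 1) (h3 : x3 * x3 = 1)
    (h : x1 * x2 + x3 * x4 = 0) : x1 * x3 + x2 * x4 = 0 := by
  linear_combination x2 * x3 * h - x1 * x3 * h2 - x2 * x4 * h3

end Signs

section GolayZCZ

variable {N τ : ℕ} {x1 x2 x3 x4 : ℂ} {a b : ℕ → ℂ}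

theorem aCorr_add_aCorr_quadConcat_mate (hab : IsGolayPair N a b)
    (hx : x1 * conj x3 + x2 * conj x4 = 0) (h1 : 0 < τ) (h2 : τ < 4 * N) :
    aCorr (quadConcat N x1 x2 x3 x4 a b) (quadConcat N x1 x2 x3 x4 a b) (4 * N) τ +
      aCorr (quadConcat N x1 x2 x3 x4 (conjReverse N b) (-conjReverse N a))
        (quadConcat N x1 x2 x3 x4 (conjReverse N b) (-conjReverse N a)) (4 * N) τ = 0 := by
  obtain ⟨m, r, hr, hτ⟩ : ∃ m r, r < N ∧ τ = m * N + r :=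
    ⟨τ / N, τ % N, Nat.mod_lt _ (by omega), (Nat.div_add_mod' τ N).symm⟩
  have hm : m < 4 := by nlinarith
  rw [aCorr_quadConcat hτ hr.le, aCorr_quadConcat hτ hr.le]
  -- For `m = 1, 2` the blocks of equal type two apart carry the factor `x1 conj x3 + x2 conj x4`;
  -- for `m = 3` the mate identities alone cancel everything.
  interval_cases m <;>
    simp only [sum_range_succ, range_one, sum_singleton, quadBlocks, Nat.reduceAdd, zero_add,
      add_zero, smul_neg, aCorr_smul, aCorr_neg_left, aCorr_neg_right, aCorr_zero_left,
      aCorr_zero_right, aCorr_conjReverse, map_mul, map_neg, map_zero, Complex.conj_conj, neg_neg,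
      neg_zero, add_neg_cancel]
  · linear_combination
      (x1 * conj x1 + x2 * conj x2 + x3 * conj x3 + x4 * conj x4) * hab r (by omega)
  · linear_combination (conj (aCorr a a N (N - r)) + conj (aCorr b b N (N - r))) * hx
  · linear_combination (aCorr a a N r + aCorr b b N r) * hx

theorem pCorr_quadConcat_self (hab : IsGolayPair N a b)
    (hx1 : x1 = 1 ∨ x1 = -1) (hx2 : x2 = 1 ∨ x2 = -1)
    (hx3 : x3 = 1 ∨ x3 = -1) (hx4 : x4 = 1 ∨ x4 = -1)
    (hsum : x1 * x2 + x3 * x4 = 0) (h1 : 0 < τ) (h2 : τ ≤ N) :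
    pCorr (quadConcat N x1 x2 x3 x4 a b) (quadConcat N x1 x2 x3 x4 a b) (4 * N) τ = 0 := by
  rw [pCorr_eq_aCorr_add_conj_aCorr (by omega), aCorr_quadConcat (m := 0) (by ring) h2,
    aCorr_quadConcat (m := 3) (r := N - τ) (by omega) (by omega)]
  simp only [sum_range_succ, range_one, sum_singleton, quadBlocks, Nat.reduceAdd, zero_add,
    add_zero, aCorr_smul, aCorr_zero_left, aCorr_zero_right, map_mul, map_zero, conj_of_sign, hx1,
    hx2, hx3, hx4]
  have h23 := mul_add_mul_swap_eq_zero (x1 := x2) (x4 := x4) (mul_self_of_sign hx1)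
    (mul_self_of_sign hx3) (by linear_combination hsum)
  linear_combination aCorr a a N τ * (mul_self_of_sign hx1 + mul_self_of_sign hx3) +
    aCorr b b N τ * (mul_self_of_sign hx2 + mul_self_of_sign hx4) + 2 * hab τ h1 +
    conj (aCorr b a N (N - τ)) * hsum + conj (aCorr a b N (N - τ)) * h23

theorem pCorr_quadConcat_mate
    (hx1 : x1 = 1 ∨ x1 = -1) (hx2 : x2 = 1 ∨ x2 = -1)
    (hx3 : x3 = 1 ∨ x3 = -1) (hx4 : x4 = 1 ∨ x4 = -1)
    (hsum : x1 * x2 + x3 * x4 = 0) (h : τ ≤ N) :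
    pCorr (quadConcat N x1 x2 x3 x4 a b)
      (quadConcat N x1 x2 x3 x4 (conjReverse N b) (-conjReverse N a)) (4 * N) τ = 0 := by
  rw [pCorr_eq_aCorr_add_conj_aCorr (by omega), aCorr_quadConcat (m := 0) (by ring) h,
    aCorr_quadConcat (m := 3) (r := N - τ) (by omega) (by omega)]
  simp only [sum_range_succ, range_one, sum_singleton, quadBlocks, Nat.reduceAdd, zero_add,
    add_zero, smul_neg, aCorr_smul, aCorr_neg_left, aCorr_neg_right, aCorr_zero_left,
    aCorr_zero_right, map_mul, map_neg, map_zero, conj_of_sign, hx1, hx2, hx3, hx4]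
  rw [aCorr_conjReverse_right_comm (u := b)]
  have h23 := mul_add_mul_swap_eq_zero (x1 := x2) (x4 := x4) (mul_self_of_sign hx1)
    (mul_self_of_sign hx3) (by linear_combination hsum)
  linear_combination aCorr a (conjReverse N b) N τ * (mul_self_of_sign hx1 +
      mul_self_of_sign hx3 - mul_self_of_sign hx2 - mul_self_of_sign hx4) -
    conj (aCorr (conjReverse N a) a N (N - τ)) * hsum +
    conj (aCorr (conjReverse N b) b N (N - τ)) * h23

end GolayZCZ

theorem statement2 (N : ℕ) (a b c d : ℕ → ℂ) (x1 x2 x3 x4 : ℂ)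
    (hx1 : x1 = 1 ∨ x1 = -1) (hx2 : x2 = 1 ∨ x2 = -1)
    (hx3 : x3 = 1 ∨ x3 = -1) (hx4 : x4 = 1 ∨ x4 = -1)
    (hsum : x1 * x2 + x3 * x4 = 0)
    (hGCP : ∀ τ, 1 ≤ τ → τ ≤ N - 1 → aCorr a a N τ + aCorr b b N τ = 0)
    (hc : ∀ k, c k = (starRingEnd ℂ) (b (N - 1 - k)))
    (hd : ∀ k, d k = -(starRingEnd ℂ) (a (N - 1 - k)))
    (p q : ℕ → ℂ)
    (hp : p = quadConcat N x1 x2 x3 x4 a b)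
    (hq : q = quadConcat N x1 x2 x3 x4 c d) :
    (∀ τ, 1 ≤ τ → τ ≤ 4 * N - 1 →
      aCorr p p (4 * N) τ + aCorr q q (4 * N) τ = 0) ∧
    (∀ τ, 1 ≤ τ → τ ≤ N →
      pCorr p p (4 * N) τ = 0 ∧ pCorr q q (4 * N) τ = 0) ∧
    (∀ τ, τ ≤ N → pCorr p q (4 * N) τ = 0) := by
  have hab : IsGolayPair N a b := fun τ hτ =>
    (lt_or_ge τ N).elim (fun h => hGCP τ hτ (by omega)) fun h => by simp [aCorr_of_le h]
  have h13 : x1 * conj x3 + x2 * conj x4 = 0 := by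
    rw [conj_of_sign hx3, conj_of_sign hx4]
    exact mul_add_mul_swap_eq_zero (mul_self_of_sign hx2) (mul_self_of_sign hx3) hsum
  obtain rfl : c = conjReverse N b := funext hc
  obtain rfl : d = -conjReverse N a := funext hd
  subst hp hq
  exact ⟨fun τ h1 h2 => aCorr_add_aCorr_quadConcat_mate hab h13 h1 (by omega),
    fun τ h1 h2 => ⟨pCorr_quadConcat_self hab hx1 hx2 hx3 hx4 hsum h1 h2,
      pCorr_quadConcat_self hab.mate hx1 hx2 hx3 hx4 hsum h1 h2⟩,
    fun τ h => pCorr_quadConcat_mate hx1 hx2 hx3 hx4 hsum h⟩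
end

section
/- Let a, b be complex sequences of length N, let (c,d) be the standard Golay complementary mate of (a,b) (c_k = conj(b_{N−1−k}), d_k = −conj(a_{N−1−k})), let x1,x2,x3,x4 ∈ {+1,−1} with x1·x2 + x3·x4 = 0, and define p = x1·a ∥ x2·b ∥ x3·a ∥ x4·b and q = x1·c ∥ x2·d ∥ x3·c ∥ x4·d of length 4N. Then for every 0 ≤ τ ≤ N−1, C_p(τ) + C_q(τ) = 4·(C_a(τ) + C_b(τ)). -/
open Finset

private lemma sign_conj {x : ℂ} (hx : x = 1 ∨ x = -1) : (starRingEnd ℂ) x = x := by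
  rcases hx with h | h <;> simp [h]

private lemma sign_sq {x : ℂ} (hx : x = 1 ∨ x = -1) : x * x = 1 := by
  rcases hx with h | h <;> simp [h]

private lemma quad_eval0 {N : ℕ} {x1 x2 x3 x4 : ℂ} {u v : ℕ → ℂ} {n : ℕ} (h : n < N) :
    quadConcat N x1 x2 x3 x4 u v n = x1 * u n := by
  simp [quadConcat, h]

private lemma quad_eval1 {N : ℕ} {x1 x2 x3 x4 : ℂ} {u v : ℕ → ℂ} {n : ℕ}
    (h1 : N ≤ n) (h2 : n < 2 * N) :
    quadConcat N x1 x2 x3 x4 u v n = x2 * v (n - N) := by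
  simp only [quadConcat]
  rw [if_neg (by omega), if_pos h2]

private lemma quad_eval2 {N : ℕ} {x1 x2 x3 x4 : ℂ} {u v : ℕ → ℂ} {n : ℕ}
    (h1 : 2 * N ≤ n) (h2 : n < 3 * N) :
    quadConcat N x1 x2 x3 x4 u v n = x3 * u (n - 2 * N) := by
  simp only [quadConcat]
  rw [if_neg (by omega), if_neg (by omega), if_pos h2]

private lemma quad_eval3 {N : ℕ} {x1 x2 x3 x4 : ℂ} {u v : ℕ → ℂ} {n : ℕ}
    (h1 : 3 * N ≤ n) :
    quadConcat N x1 x2 x3 x4 u v n = x4 * v (n - 3 * N) := by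
  simp only [quadConcat]
  rw [if_neg (by omega), if_neg (by omega), if_neg (by omega)]

private lemma split7 (N τ : ℕ) (hτ : τ < N) (f : ℕ → ℂ) :
    ∑ k ∈ Finset.range (4 * N - τ), f k =
      (∑ i ∈ Finset.range (N - τ), f i) + (∑ i ∈ Finset.range τ, f (N - τ + i))
      + (∑ i ∈ Finset.range (N - τ), f (N + i)) + (∑ i ∈ Finset.range τ, f (2 * N - τ + i))
      + (∑ i ∈ Finset.range (N - τ), f (2 * N + i)) + (∑ i ∈ Finset.range τ, f (3 * N - τ + i))
      + (∑ i ∈ Finset.range (N - τ), f (3 * N + i)) := by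
  rw [Finset.range_eq_Ico,
    ← Finset.sum_Ico_consecutive f (by omega : 0 ≤ N - τ) (by omega : N - τ ≤ 4 * N - τ),
    ← Finset.sum_Ico_consecutive f (by omega : N - τ ≤ N) (by omega : N ≤ 4 * N - τ),
    ← Finset.sum_Ico_consecutive f (by omega : N ≤ 2 * N - τ) (by omega : 2 * N - τ ≤ 4 * N - τ),
    ← Finset.sum_Ico_consecutive f (by omega : 2 * N - τ ≤ 2 * N) (by omega : 2 * N ≤ 4 * N - τ),
    ← Finset.sum_Ico_consecutive f (by omega : 2 * N ≤ 3 * N - τ) (by omega : 3 * N - τ ≤ 4 * N - τ),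
    ← Finset.sum_Ico_consecutive f (by omega : 3 * N - τ ≤ 3 * N) (by omega : 3 * N ≤ 4 * N - τ)]
  simp only [Finset.sum_Ico_eq_sum_range, Nat.sub_zero, Nat.zero_add]
  rw [show N - (N - τ) = τ by omega, show 2 * N - τ - N = N - τ by omega,
    show 2 * N - (2 * N - τ) = τ by omega, show 3 * N - τ - 2 * N = N - τ by omega,
    show 3 * N - (3 * N - τ) = τ by omega, show 4 * N - τ - 3 * N = N - τ by omega]
  ring

noncomputable def crossT (N : ℕ) (a b : ℕ → ℂ) (τ : ℕ) : ℂ :=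
  ∑ i ∈ Finset.range τ, a (N - τ + i) * (starRingEnd ℂ) (b i)

private lemma quad_expand (N : ℕ) (x1 x2 x3 x4 : ℂ) (u v : ℕ → ℂ)
    (hx1 : x1 = 1 ∨ x1 = -1) (hx2 : x2 = 1 ∨ x2 = -1)
    (hx3 : x3 = 1 ∨ x3 = -1) (hx4 : x4 = 1 ∨ x4 = -1)
    (τ : ℕ) (hτ : τ < N) :
    aCorr (quadConcat N x1 x2 x3 x4 u v) (quadConcat N x1 x2 x3 x4 u v) (4 * N) τ =
      2 * (aCorr u u N τ + aCorr v v N τ)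
        + x1 * x2 * crossT N u v τ + x2 * x3 * crossT N v u τ
        + x3 * x4 * crossT N u v τ := by
  set Q := quadConcat N x1 x2 x3 x4 u v with hQ
  have h := split7 N τ hτ (fun k => Q k * (starRingEnd ℂ) (Q (k + τ)))
  simp only [] at h
  rw [aCorr, h]
  have p1 : ∑ i ∈ Finset.range (N - τ), Q i * (starRingEnd ℂ) (Q (i + τ)) =
      aCorr u u N τ := by
    rw [aCorr]
    refine Finset.sum_congr rfl fun i hi => ?_
    rw [Finset.mem_range] at hi
    rw [hQ, quad_eval0 (by omega), quad_eval0 (by omega), map_mul, sign_conj hx1]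
    linear_combination u i * (starRingEnd ℂ) (u (i + τ)) * sign_sq hx1
  have p2 : ∑ i ∈ Finset.range τ, Q (N - τ + i) * (starRingEnd ℂ) (Q (N - τ + i + τ)) =
      x1 * x2 * crossT N u v τ := by
    rw [crossT, Finset.mul_sum]
    refine Finset.sum_congr rfl fun i hi => ?_
    rw [Finset.mem_range] at hi
    rw [hQ, quad_eval0 (by omega), quad_eval1 (by omega) (by omega),
      show N - τ + i + τ - N = i by omega, map_mul, sign_conj hx2]
    ring
  have p3 : ∑ i ∈ Finset.range (N - τ), Q (N + i) * (starRingEnd ℂ) (Q (N + i + τ)) =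
      aCorr v v N τ := by
    rw [aCorr]
    refine Finset.sum_congr rfl fun i hi => ?_
    rw [Finset.mem_range] at hi
    rw [hQ, quad_eval1 (by omega) (by omega), quad_eval1 (by omega) (by omega),
      show N + i - N = i by omega, show N + i + τ - N = i + τ by omega,
      map_mul, sign_conj hx2]
    linear_combination v i * (starRingEnd ℂ) (v (i + τ)) * sign_sq hx2
  have p4 : ∑ i ∈ Finset.range τ, Q (2 * N - τ + i) * (starRingEnd ℂ) (Q (2 * N - τ + i + τ)) =
      x2 * x3 * crossT N v u τ := by
    rw [crossT, Finset.mul_sum]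
    refine Finset.sum_congr rfl fun i hi => ?_
    rw [Finset.mem_range] at hi
    rw [hQ, quad_eval1 (by omega) (by omega), quad_eval2 (by omega) (by omega),
      show 2 * N - τ + i - N = N - τ + i by omega,
      show 2 * N - τ + i + τ - 2 * N = i by omega, map_mul, sign_conj hx3]
    ring
  have p5 : ∑ i ∈ Finset.range (N - τ), Q (2 * N + i) * (starRingEnd ℂ) (Q (2 * N + i + τ)) =
      aCorr u u N τ := by
    rw [aCorr]
    refine Finset.sum_congr rfl fun i hi => ?_
    rw [Finset.mem_range] at hi
    rw [hQ, quad_eval2 (by omega) (by omega), quad_eval2 (by omega) (by omega),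
      show 2 * N + i - 2 * N = i by omega, show 2 * N + i + τ - 2 * N = i + τ by omega,
      map_mul, sign_conj hx3]
    linear_combination u i * (starRingEnd ℂ) (u (i + τ)) * sign_sq hx3
  have p6 : ∑ i ∈ Finset.range τ, Q (3 * N - τ + i) * (starRingEnd ℂ) (Q (3 * N - τ + i + τ)) =
      x3 * x4 * crossT N u v τ := by
    rw [crossT, Finset.mul_sum]
    refine Finset.sum_congr rfl fun i hi => ?_
    rw [Finset.mem_range] at hi
    rw [hQ, quad_eval2 (by omega) (by omega), quad_eval3 (by omega),
      show 3 * N - τ + i - 2 * N = N - τ + i by omega,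
      show 3 * N - τ + i + τ - 3 * N = i by omega, map_mul, sign_conj hx4]
    ring
  have p7 : ∑ i ∈ Finset.range (N - τ), Q (3 * N + i) * (starRingEnd ℂ) (Q (3 * N + i + τ)) =
      aCorr v v N τ := by
    rw [aCorr]
    refine Finset.sum_congr rfl fun i hi => ?_
    rw [Finset.mem_range] at hi
    rw [hQ, quad_eval3 (by omega), quad_eval3 (by omega),
      show 3 * N + i - 3 * N = i by omega, show 3 * N + i + τ - 3 * N = i + τ by omega,
      map_mul, sign_conj hx4]
    linear_combination v i * (starRingEnd ℂ) (v (i + τ)) * sign_sq hx4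
  rw [p1, p2, p3, p4, p5, p6, p7]
  ring

private lemma corr_reflect_c (N τ : ℕ) (hτ : τ < N) (b c : ℕ → ℂ)
    (hc : ∀ k, c k = (starRingEnd ℂ) (b (N - 1 - k))) :
    aCorr c c N τ = aCorr b b N τ := by
  rw [aCorr, aCorr]
  conv_rhs => rw [← Finset.sum_range_reflect (fun k => b k * (starRingEnd ℂ) (b (k + τ))) (N - τ)]
  refine Finset.sum_congr rfl fun i hi => ?_
  rw [Finset.mem_range] at hi
  rw [hc, hc, show N - 1 - (i + τ) = N - τ - 1 - i by omega,
    show N - τ - 1 - i + τ = N - 1 - i by omega, Complex.conj_conj]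
  ring

private lemma corr_reflect_d (N τ : ℕ) (hτ : τ < N) (a d : ℕ → ℂ)
    (hd : ∀ k, d k = -(starRingEnd ℂ) (a (N - 1 - k))) :
    aCorr d d N τ = aCorr a a N τ := by
  rw [aCorr, aCorr]
  conv_rhs => rw [← Finset.sum_range_reflect (fun k => a k * (starRingEnd ℂ) (a (k + τ))) (N - τ)]
  refine Finset.sum_congr rfl fun i hi => ?_
  rw [Finset.mem_range] at hi
  rw [hd, hd, show N - 1 - (i + τ) = N - τ - 1 - i by omega,
    show N - τ - 1 - i + τ = N - 1 - i by omega, map_neg, Complex.conj_conj]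
  ring

private lemma crossT_dc (N τ : ℕ) (hτ : τ < N) (a b c d : ℕ → ℂ)
    (hc : ∀ k, c k = (starRingEnd ℂ) (b (N - 1 - k)))
    (hd : ∀ k, d k = -(starRingEnd ℂ) (a (N - 1 - k))) :
    crossT N d c τ = -crossT N b a τ := by
  rw [crossT, crossT, ← Finset.sum_neg_distrib]
  conv_rhs => rw [← Finset.sum_range_reflect (fun j => -(b (N - τ + j) * (starRingEnd ℂ) (a j))) τ]
  refine Finset.sum_congr rfl fun i hi => ?_
  rw [Finset.mem_range] at hi
  rw [hd, hc, show N - 1 - (N - τ + i) = τ - 1 - i by omega,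
    show N - τ + (τ - 1 - i) = N - 1 - i by omega, Complex.conj_conj]
  ring

theorem statement3 (N : ℕ) (a b c d : ℕ → ℂ) (x1 x2 x3 x4 : ℂ)
    (hx1 : x1 = 1 ∨ x1 = -1) (hx2 : x2 = 1 ∨ x2 = -1)
    (hx3 : x3 = 1 ∨ x3 = -1) (hx4 : x4 = 1 ∨ x4 = -1)
    (hsum : x1 * x2 + x3 * x4 = 0)
    (hc : ∀ k, c k = (starRingEnd ℂ) (b (N - 1 - k)))
    (hd : ∀ k, d k = -(starRingEnd ℂ) (a (N - 1 - k)))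
    (p q : ℕ → ℂ)
    (hp : p = quadConcat N x1 x2 x3 x4 a b)
    (hq : q = quadConcat N x1 x2 x3 x4 c d) :
    ∀ τ, τ ≤ N - 1 →
      aCorr p p (4 * N) τ + aCorr q q (4 * N) τ =
        4 * (aCorr a a N τ + aCorr b b N τ) := by
  intro τ hτle
  rcases Nat.eq_zero_or_pos N with hN | hN
  · subst hN
    interval_cases τ
    simp [aCorr]
  have hτ : τ < N := by omega
  rw [hp, hq, quad_expand N x1 x2 x3 x4 a b hx1 hx2 hx3 hx4 τ hτ,
    quad_expand N x1 x2 x3 x4 c d hx1 hx2 hx3 hx4 τ hτ,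
    corr_reflect_c N τ hτ b c hc, corr_reflect_d N τ hτ a d hd,
    crossT_dc N τ hτ a b c d hc hd]
  linear_combination (crossT N a b τ + crossT N c d τ) * hsum
end

section
/- Let a, b be complex sequences of length N, let (c,d) be the standard Golay complementary mate of (a,b) (c_k = conj(b_{N−1−k}), d_k = −conj(a_{N−1−k})), let x1,x2,x3,x4 ∈ {+1,−1}, and define p = x1·a ∥ x2·b ∥ x3·a ∥ x4·b and q = x1·c ∥ x2·d ∥ x3·c ∥ x4·d of length 4N. Then for every shift τ with 3N ≤ τ ≤ 4N−1, C_p(τ) = x1·x4·C_{a,b}(τ−3N), C_q(τ) = x1·x4·C_{c,d}(τ−3N), and consequently C_p(τ) + C_q(τ) = 0. -/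
open Finset

lemma corr_shift (N : ℕ) (x1 x2 x3 x4 : ℂ) (hx4 : x4 = 1 ∨ x4 = -1)
    (a b : ℕ → ℂ) (τ : ℕ) (hτ : 3 * N ≤ τ) :
    aCorr (quadConcat N x1 x2 x3 x4 a b) (quadConcat N x1 x2 x3 x4 a b) (4 * N) τ
      = x1 * x4 * aCorr a b N (τ - 3 * N) := by
  unfold aCorr
  rw [Finset.mul_sum, show (4 * N - τ) = N - (τ - 3 * N) from by omega]
  apply Finset.sum_congr rfl
  intro k hk
  simp only [Finset.mem_range] at hk
  have hkN : k < N := by omega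
  have h1 : ¬ k + τ < N := by omega
  have h2 : ¬ k + τ < 2 * N := by omega
  have h3 : ¬ k + τ < 3 * N := by omega
  have h5 : k + τ - 3 * N = k + (τ - 3 * N) := by omega
  simp only [quadConcat, if_pos hkN, if_neg h1, if_neg h2, if_neg h3, h5, map_mul]
  have hc4 : (starRingEnd ℂ) x4 = x4 := by rcases hx4 with h | h <;> simp [h]
  rw [hc4]; ring

lemma mate_corr (N : ℕ) (a b c d : ℕ → ℂ)
    (hc : ∀ k, c k = (starRingEnd ℂ) (b (N - 1 - k)))
    (hd : ∀ k, d k = -(starRingEnd ℂ) (a (N - 1 - k)))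
    (s : ℕ) : aCorr c d N s = - aCorr a b N s := by
  unfold aCorr
  rw [← Finset.sum_range_reflect (fun k => a k * (starRingEnd ℂ) (b (k + s))) (N - s),
    ← Finset.sum_neg_distrib]
  apply Finset.sum_congr rfl
  intro k hk
  simp only [Finset.mem_range] at hk
  have h1 : N - 1 - k = N - s - 1 - k + s := by omega
  have h2 : N - 1 - (k + s) = N - s - 1 - k := by omega
  rw [hc, hd, h1, h2, map_neg, Complex.conj_conj]
  ring

theorem statement6 (N : ℕ) (a b c d : ℕ → ℂ) (x1 x2 x3 x4 : ℂ)
    (hx1 : x1 = 1 ∨ x1 = -1) (hx2 : x2 = 1 ∨ x2 = -1)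
    (hx3 : x3 = 1 ∨ x3 = -1) (hx4 : x4 = 1 ∨ x4 = -1)
    (hc : ∀ k, c k = (starRingEnd ℂ) (b (N - 1 - k)))
    (hd : ∀ k, d k = -(starRingEnd ℂ) (a (N - 1 - k)))
    (p q : ℕ → ℂ)
    (hp : p = quadConcat N x1 x2 x3 x4 a b)
    (hq : q = quadConcat N x1 x2 x3 x4 c d) :
    ∀ τ, 3 * N ≤ τ → τ ≤ 4 * N - 1 →
      aCorr p p (4 * N) τ = x1 * x4 * aCorr a b N (τ - 3 * N) ∧
      aCorr q q (4 * N) τ = x1 * x4 * aCorr c d N (τ - 3 * N) ∧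
      aCorr p p (4 * N) τ + aCorr q q (4 * N) τ = 0 := by
  intro τ h1 h2
  have hp' := corr_shift N x1 x2 x3 x4 hx4 a b τ h1
  have hq' := corr_shift N x1 x2 x3 x4 hx4 c d τ h1
  rw [← hp] at hp'
  rw [← hq] at hq'
  refine ⟨hp', hq', ?_⟩
  rw [hp', hq', mate_corr N a b c d hc hd]
  ring
end

section
/- Let a, b be complex sequences of length N, let x1,x2,x3,x4 ∈ {+1,−1} with x1·x2 + x3·x4 = 0, and define the length-4N sequence p = x1·a ∥ x2·b ∥ x3·a ∥ x4·b. Then for every shift 1 ≤ τ ≤ N, the periodic autocorrelation satisfies R_p(τ) = 2·(C_a(τ) + C_b(τ)), where C_a(N) and C_b(N) are interpreted as 0. In particular, if (a,b) is a Golay complementary pair then R_p(τ) = 0 for all 1 ≤ τ ≤ N. -/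
/-!
Read `p` periodically, so that its fifth block is again `x1·a`. Over each block `xⱼ·s` followed by
`xⱼ₊₁·s'`, the shifted products split into those staying inside the block, contributing
`xⱼ conj(xⱼ) C_s(τ) = C_s(τ)`, and those reaching into the next block, contributing
`xⱼ conj(xⱼ₊₁)` times a cross-correlation of `a` and `b` (which one depends only on the parity
of `j`). The cross terms therefore come with the coefficients `x1x2 + x3x4` and `x2x3 + x4x1`,
both zero, leaving `2 (C_a(τ) + C_b(τ))`.
-/

open Finset

theorem aCorr_self_length (a b : ℕ → ℂ) (L : ℕ) : aCorr a b L L = 0 := by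
  simp [aCorr]

theorem aCorr_const_mul (a b : ℕ → ℂ) (x y : ℂ) (L τ : ℕ) :
    aCorr (fun k => x * a k) (fun k => y * b k) L τ = x * starRingEnd ℂ y * aCorr a b L τ := by
  simp only [aCorr, mul_sum, map_mul]
  exact sum_congr rfl fun _ _ => by ring

theorem pCorr_eq_sum_mod (p : ℕ → ℂ) (L τ : ℕ) :
    pCorr p p L τ = ∑ k ∈ range L, p (k % L) * starRingEnd ℂ (p ((k + τ) % L)) :=
  sum_congr rfl fun k hk => by rw [Nat.mod_eq_of_lt (mem_range.mp hk)]

theorem sum_range_four_mul {M : Type*} [AddCommMonoid M] (f : ℕ → M) (N : ℕ) :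
    ∑ k ∈ range (4 * N), f k = ∑ i ∈ range N, f i + ∑ i ∈ range N, f (N + i) +
      ∑ i ∈ range N, f (N + N + i) + ∑ i ∈ range N, f (N + N + N + i) := by
  rw [show 4 * N = N + N + N + N by ring, sum_range_add, sum_range_add, sum_range_add]

/-- The shifted products that stay inside `u` give `C_u(τ)`; those that run into `v` give
`conj (C_{v,u}(N - τ))`. -/
theorem sum_mul_conj_shift_of_blocks (q u v : ℕ → ℂ) {m N τ : ℕ} (hτ : τ ≤ N)
    (hu : ∀ i < N, q (m + i) = u i) (hv : ∀ i < N, q (m + N + i) = v i) :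
    ∑ i ∈ range N, q (m + i) * starRingEnd ℂ (q (m + i + τ)) =
      aCorr u u N τ + starRingEnd ℂ (aCorr v u N (N - τ)) := by
  rw [aCorr, aCorr, Nat.sub_sub_self hτ, map_sum]
  conv_lhs => rw [← Nat.sub_add_cancel hτ, sum_range_add]
  congr 1
  · refine sum_congr rfl fun i hi => ?_
    have hi := mem_range.mp hi
    rw [hu i (by omega), add_assoc, hu (i + τ) (by omega)]
  · refine sum_congr rfl fun i hi => ?_
    have hi := mem_range.mp hi
    rw [hu _ (by omega), show m + (N - τ + i) + τ = m + N + i by omega, hv i (by omega), map_mul,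
      Complex.conj_conj, mul_comm, add_comm i]

section quadConcat

variable (N : ℕ) (x1 x2 x3 x4 : ℂ) (a b : ℕ → ℂ) {i : ℕ}

theorem quadConcat_mod_block0 (hi : i < N) :
    quadConcat N x1 x2 x3 x4 a b (i % (4 * N)) = x1 * a i := by
  rw [Nat.mod_eq_of_lt (by omega), quadConcat, if_pos hi]

theorem quadConcat_mod_block1 (hi : i < N) :
    quadConcat N x1 x2 x3 x4 a b ((N + i) % (4 * N)) = x2 * b i := by
  rw [Nat.mod_eq_of_lt (by omega), quadConcat, if_neg (by omega), if_pos (by omega),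
    Nat.add_sub_cancel_left]

theorem quadConcat_mod_block2 (hi : i < N) :
    quadConcat N x1 x2 x3 x4 a b ((N + N + i) % (4 * N)) = x3 * a i := by
  rw [Nat.mod_eq_of_lt (by omega), quadConcat, if_neg (by omega), if_neg (by omega),
    if_pos (by omega), show N + N + i - 2 * N = i by omega]

theorem quadConcat_mod_block3 (hi : i < N) :
    quadConcat N x1 x2 x3 x4 a b ((N + N + N + i) % (4 * N)) = x4 * b i := by
  rw [Nat.mod_eq_of_lt (by omega), quadConcat, if_neg (by omega), if_neg (by omega),
    if_neg (by omega), show N + N + N + i - 3 * N = i by omega]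

theorem quadConcat_mod_block4 (hi : i < N) :
    quadConcat N x1 x2 x3 x4 a b ((N + N + N + N + i) % (4 * N)) = x1 * a i := by
  rw [show N + N + N + N + i = i + 4 * N by ring, Nat.add_mod_right,
    quadConcat_mod_block0 _ _ _ _ _ _ _ hi]

theorem pCorr_quadConcat {τ : ℕ} (hτ : τ ≤ N) :
    pCorr (quadConcat N x1 x2 x3 x4 a b) (quadConcat N x1 x2 x3 x4 a b) (4 * N) τ =
      x1 * starRingEnd ℂ x1 * aCorr a a N τ + x2 * starRingEnd ℂ x2 * aCorr b b N τ +
      x3 * starRingEnd ℂ x3 * aCorr a a N τ + x4 * starRingEnd ℂ x4 * aCorr b b N τ +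
      (x1 * starRingEnd ℂ x2 + x3 * starRingEnd ℂ x4) * starRingEnd ℂ (aCorr b a N (N - τ)) +
      (x2 * starRingEnd ℂ x3 + x4 * starRingEnd ℂ x1) * starRingEnd ℂ (aCorr a b N (N - τ)) := by
  let q : ℕ → ℂ := fun n => quadConcat N x1 x2 x3 x4 a b (n % (4 * N))
  have block01 := sum_mul_conj_shift_of_blocks q (fun k => x1 * a k) (fun k => x2 * b k)
    (m := 0) hτ
    (fun i hi => by rw [zero_add]; exact quadConcat_mod_block0 _ _ _ _ _ _ _ hi)
    (fun i hi => by rw [zero_add]; exact quadConcat_mod_block1 _ _ _ _ _ _ _ hi)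
  have block12 := sum_mul_conj_shift_of_blocks q (fun k => x2 * b k) (fun k => x3 * a k)
    (m := N) hτ
    (fun i hi => quadConcat_mod_block1 _ _ _ _ _ _ _ hi)
    (fun i hi => quadConcat_mod_block2 _ _ _ _ _ _ _ hi)
  have block23 := sum_mul_conj_shift_of_blocks q (fun k => x3 * a k) (fun k => x4 * b k)
    (m := N + N) hτ
    (fun i hi => quadConcat_mod_block2 _ _ _ _ _ _ _ hi)
    (fun i hi => quadConcat_mod_block3 _ _ _ _ _ _ _ hi)
  have block30 := sum_mul_conj_shift_of_blocks q (fun k => x4 * b k) (fun k => x1 * a k)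
    (m := N + N + N) hτ
    (fun i hi => quadConcat_mod_block3 _ _ _ _ _ _ _ hi)
    (fun i hi => quadConcat_mod_block4 _ _ _ _ _ _ _ hi)
  simp only [q, zero_add, aCorr_const_mul] at block01 block12 block23 block30
  rw [pCorr_eq_sum_mod, sum_range_four_mul, block01, block12, block23, block30]
  simp only [map_mul, Complex.conj_conj]
  ring

end quadConcat

theorem conj_eq_self_and_mul_self_eq_one {x : ℂ} (hx : x = 1 ∨ x = -1) :
    starRingEnd ℂ x = x ∧ x * x = 1 := by
  rcases hx with rfl | rfl <;> norm_num

theorem statement7 (N : ℕ) (a b : ℕ → ℂ) (x1 x2 x3 x4 : ℂ)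
    (hx1 : x1 = 1 ∨ x1 = -1) (hx2 : x2 = 1 ∨ x2 = -1)
    (hx3 : x3 = 1 ∨ x3 = -1) (hx4 : x4 = 1 ∨ x4 = -1)
    (hsum : x1 * x2 + x3 * x4 = 0)
    (p : ℕ → ℂ) (hp : p = quadConcat N x1 x2 x3 x4 a b) :
    ∀ τ, 1 ≤ τ → τ ≤ N →
      pCorr p p (4 * N) τ = 2 * (aCorr a a N τ + aCorr b b N τ) ∧
      ((∀ t, 1 ≤ t → t ≤ N - 1 → aCorr a a N t + aCorr b b N t = 0) →
        pCorr p p (4 * N) τ = 0) := by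
  intro τ hτ1 hτN
  obtain ⟨c1, s1⟩ := conj_eq_self_and_mul_self_eq_one hx1
  obtain ⟨c2, s2⟩ := conj_eq_self_and_mul_self_eq_one hx2
  obtain ⟨c3, s3⟩ := conj_eq_self_and_mul_self_eq_one hx3
  obtain ⟨c4, s4⟩ := conj_eq_self_and_mul_self_eq_one hx4
  have hR : pCorr p p (4 * N) τ = 2 * (aCorr a a N τ + aCorr b b N τ) := by
    rw [hp, pCorr_quadConcat _ _ _ _ _ _ _ hτN, c1, c2, c3, c4]
    -- `x2 * x3 + x4 * x1 = x2 * x4 * (x1 * x2 + x3 * x4)` because `x2 ^ 2 = x4 ^ 2 = 1`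
    linear_combination aCorr a a N τ * (s1 + s3) + aCorr b b N τ * (s2 + s4) +
      starRingEnd ℂ (aCorr b a N (N - τ)) * hsum +
      starRingEnd ℂ (aCorr a b N (N - τ)) * (x2 * x4 * hsum - x2 * x3 * s4 - x1 * x4 * s2)
  refine ⟨hR, fun hGolay => ?_⟩
  rcases hτN.eq_or_lt with rfl | hlt
  · rw [hR, aCorr_self_length, aCorr_self_length, add_zero, mul_zero]
  · rw [hR, hGolay τ hτ1 (by omega), mul_zero]
end

section
/- Let 𝔠 = {C^0,…,C^{M−1}} be an (M,M,N)-complete complementary code, where C^k consists of the length-N complex sequences c^k_0,…,c^k_{M−1}. For 0 ≤ i ≤ M−1 define D^i to be the collection of M length-N sequences c^0_i, c^1_i, …, c^{M−1}_i (the i-th sequence taken from each set). Then 𝔡 = {D^0,…,D^{M−1}} is also an (M,M,N)-complete complementary code; that is, for all 0 ≤ i1, i2 ≤ M−1 and 0 ≤ τ ≤ N−1, Σ_{k=0}^{M−1} C_{c^k_{i1}, c^k_{i2}}(τ) = M·N if i1 = i2 and τ = 0, and equals 0 otherwise. -/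
open Finset

lemma split_prod (N : ℕ) (f : ℕ → ℕ → ℂ) :
    ∑ p ∈ Finset.range N ×ˢ Finset.range N, f p.1 p.2 =
      (∑ τ ∈ Finset.range N, ∑ n ∈ Finset.range (N - τ), f (n + τ) n) +
      (∑ τ ∈ Finset.Ico 1 N, ∑ n ∈ Finset.range (N - τ), f n (n + τ)) := by
  classical
  rw [← Finset.sum_filter_add_sum_filter_not (Finset.range N ×ˢ Finset.range N)
    (fun p => p.2 ≤ p.1)]
  congr 1
  · rw [Finset.sum_sigma']
    refine Finset.sum_nbij' (i := fun p => ⟨p.1 - p.2, p.2⟩)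
      (j := fun x => (x.2 + x.1, x.2)) ?_ ?_ ?_ ?_ ?_
    · intro a ha
      simp only [mem_filter, mem_product, mem_range] at ha
      simp only [mem_sigma, mem_range]
      omega
    · intro b hb
      simp only [mem_sigma, mem_range] at hb
      simp only [mem_filter, mem_product, mem_range]
      omega
    · intro a ha
      simp only [mem_filter, mem_product, mem_range] at ha
      ext <;> simp <;> omega
    · intro b hb
      simp only [mem_sigma, mem_range] at hb
      simp
    · intro a ha
      simp only [mem_filter, mem_product, mem_range] at ha
      have : a.2 + (a.1 - a.2) = a.1 := by omega
      simp [this]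
  · rw [Finset.sum_sigma']
    refine Finset.sum_nbij' (i := fun p => ⟨p.2 - p.1, p.1⟩)
      (j := fun x => (x.2, x.2 + x.1)) ?_ ?_ ?_ ?_ ?_
    · intro a ha
      simp only [mem_filter, mem_product, mem_range, not_le] at ha
      simp only [mem_sigma, mem_range, Finset.mem_Ico]
      omega
    · intro b hb
      simp only [mem_sigma, mem_range, Finset.mem_Ico] at hb
      simp only [mem_filter, mem_product, mem_range, not_le]
      omega
    · intro a ha
      simp only [mem_filter, mem_product, mem_range, not_le] at ha
      ext <;> simp <;> omega
    · intro b hb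
      simp only [mem_sigma, mem_range, Finset.mem_Ico] at hb
      simp
    · intro a ha
      simp only [mem_filter, mem_product, mem_range, not_le] at ha
      have : a.1 + (a.2 - a.1) = a.2 := by omega
      simp [this]

lemma expand_mul (N : ℕ) (a b : ℕ → ℂ) (ζ : ℂ) :
    (∑ n ∈ Finset.range N, a n * ζ ^ n) * (∑ n ∈ Finset.range N, b n * ζ ^ (N - 1 - n)) =
      (∑ τ ∈ Finset.range N, (∑ n ∈ Finset.range (N - τ), a (n + τ) * b n) * ζ ^ (N - 1 + τ)) +
      (∑ τ ∈ Finset.Ico 1 N, (∑ n ∈ Finset.range (N - τ), a n * b (n + τ)) * ζ ^ (N - 1 - τ)) := by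
  have h1 : (∑ n ∈ Finset.range N, a n * ζ ^ n) * (∑ n ∈ Finset.range N, b n * ζ ^ (N - 1 - n))
      = ∑ p ∈ Finset.range N ×ˢ Finset.range N,
          (fun n1 n2 => a n1 * b n2 * ζ ^ (N - 1 + n1 - n2)) p.1 p.2 := by
    rw [Finset.sum_mul_sum, Finset.sum_product]
    refine Finset.sum_congr rfl fun n1 hn1 => Finset.sum_congr rfl fun n2 hn2 => ?_
    simp only [Finset.mem_range] at hn1 hn2
    have he : n1 + (N - 1 - n2) = N - 1 + n1 - n2 := by omega
    rw [mul_mul_mul_comm, ← pow_add, he]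
  have h2 := split_prod N (fun n1 n2 => a n1 * b n2 * ζ ^ (N - 1 + n1 - n2))
  rw [h1, h2]
  congr 1
  · refine Finset.sum_congr rfl fun τ hτ => ?_
    simp only [Finset.mem_range] at hτ
    rw [Finset.sum_mul]
    refine Finset.sum_congr rfl fun n hn => ?_
    simp only [Finset.mem_range] at hn
    have he : N - 1 + (n + τ) - n = N - 1 + τ := by omega
    rw [he]
  · refine Finset.sum_congr rfl fun τ hτ => ?_
    simp only [Finset.mem_Ico] at hτ
    rw [Finset.sum_mul]
    refine Finset.sum_congr rfl fun n hn => ?_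
    simp only [Finset.mem_range] at hn
    have he : N - 1 + n - (n + τ) = N - 1 - τ := by omega
    rw [he]

lemma matrix_comm_smul (M : ℕ) (F G : Matrix (Fin M) (Fin M) ℂ) (s : ℂ) (hs : s ≠ 0)
    (h : F * G = s • 1) : G * F = s • 1 := by
  have h1 : F * (s⁻¹ • G) = 1 := by
    rw [Matrix.mul_smul, h, smul_smul, inv_mul_cancel₀ hs, one_smul]
  have h2 : (s⁻¹ • G) * F = 1 := mul_eq_one_comm.mp h1
  calc G * F = (s • s⁻¹ • G) * F := by rw [smul_smul, mul_inv_cancel₀ hs, one_smul]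
    _ = s • ((s⁻¹ • G) * F) := by rw [Matrix.smul_mul]
    _ = s • 1 := by rw [h2]

lemma key (M N : ℕ) (hM : 0 < M) (hN : 0 < N)
    (c : ℕ → ℕ → ℕ → ℂ)
    (hCCC : ∀ k1 < M, ∀ k2 < M, ∀ τ < N,
      ∑ m ∈ Finset.range M, aCorr (c k1 m) (c k2 m) N τ =
        if k1 = k2 ∧ τ = 0 then (M * N : ℂ) else 0)
    (i1 i2 : ℕ) (hi1 : i1 < M) (hi2 : i2 < M) (ζ : ℂ) (hζ : ζ ≠ 0) :
    (∑ τ ∈ Finset.range N,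
        (starRingEnd ℂ) (∑ k ∈ Finset.range M, aCorr (c k i1) (c k i2) N τ) * ζ ^ (N - 1 + τ)) +
      (∑ τ ∈ Finset.Ico 1 N,
        (∑ k ∈ Finset.range M, aCorr (c k i2) (c k i1) N τ) * ζ ^ (N - 1 - τ)) =
      (if i1 = i2 then (M * N : ℂ) else 0) * ζ ^ (N - 1) := by
  have hs : ((M : ℂ) * N * ζ ^ (N - 1)) ≠ 0 := by
    apply mul_ne_zero
    · exact mul_ne_zero (Nat.cast_ne_zero.mpr hM.ne') (Nat.cast_ne_zero.mpr hN.ne')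
    · exact pow_ne_zero _ hζ
  set F : Matrix (Fin M) (Fin M) ℂ :=
    Matrix.of (fun k m : Fin M => ∑ n ∈ Finset.range N, c k m n * ζ ^ n) with hF
  set G : Matrix (Fin M) (Fin M) ℂ :=
    Matrix.of (fun m k : Fin M =>
      ∑ n ∈ Finset.range N, (starRingEnd ℂ) (c k m n) * ζ ^ (N - 1 - n)) with hG
  have hFG : F * G = ((M : ℂ) * N * ζ ^ (N - 1)) • 1 := by
    ext k1 k2
    rw [Matrix.mul_apply]
    have hterm : ∀ m : Fin M, F k1 m * G m k2 =
        (∑ τ ∈ Finset.range N,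
          (∑ n ∈ Finset.range (N - τ), c k1 m (n + τ) * (starRingEnd ℂ) (c k2 m n)) *
            ζ ^ (N - 1 + τ)) +
        (∑ τ ∈ Finset.Ico 1 N, aCorr (c k1 m) (c k2 m) N τ * ζ ^ (N - 1 - τ)) := by
      intro m
      rw [hF, hG]
      simpa [aCorr] using
        expand_mul N (c k1 m) (fun n => (starRingEnd ℂ) (c k2 m n)) ζ
    rw [Finset.sum_congr rfl fun m _ => hterm m, Finset.sum_add_distrib,
      Finset.sum_comm, Finset.sum_comm (s := Finset.univ)]
    have e1 : ∀ τ ∈ Finset.range N,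
        (∑ m : Fin M, (∑ n ∈ Finset.range (N - τ),
          c k1 m (n + τ) * (starRingEnd ℂ) (c k2 m n)) * ζ ^ (N - 1 + τ)) =
        ((starRingEnd ℂ) (if (k2 : ℕ) = (k1 : ℕ) ∧ τ = 0 then (M * N : ℂ) else 0)) *
          ζ ^ (N - 1 + τ) := by
      intro τ hτ
      rw [← Finset.sum_mul]
      congr 1
      rw [← hCCC k2 k2.isLt k1 k1.isLt τ (Finset.mem_range.mp hτ)]
      rw [map_sum, ← Fin.sum_univ_eq_sum_range
        (fun k => (starRingEnd ℂ) (aCorr (c k2 k) (c k1 k) N τ))]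
      refine Finset.sum_congr rfl fun m _ => ?_
      simp only [aCorr, map_sum, map_mul, RingHom.id_apply, starRingEnd_self_apply]
      refine Finset.sum_congr rfl fun n _ => ?_
      ring
    have e2 : ∀ τ ∈ Finset.Ico 1 N,
        (∑ m : Fin M, aCorr (c k1 m) (c k2 m) N τ * ζ ^ (N - 1 - τ)) = 0 := by
      intro τ hτ
      rw [← Finset.sum_mul, Fin.sum_univ_eq_sum_range
        (fun m => aCorr (c k1 m) (c k2 m) N τ),
        hCCC k1 k1.isLt k2 k2.isLt τ (Finset.mem_Ico.mp hτ).2]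
      have : ¬((k1 : ℕ) = (k2 : ℕ) ∧ τ = 0) := by
        intro h
        have := (Finset.mem_Ico.mp hτ).1
        omega
      rw [if_neg this, zero_mul]
    rw [Finset.sum_congr rfl e1, Finset.sum_congr rfl e2, Finset.sum_const_zero, add_zero]
    by_cases hk : k1 = k2
    · subst hk
      rw [Finset.sum_eq_single 0]
      · simp [Matrix.smul_apply, Matrix.one_apply, mul_comm]
      · intro τ hτ hτ0
        simp [hτ0]
      · intro h
        exact absurd (Finset.mem_range.mpr hN) h
    · have : ¬((k2 : ℕ) = (k1 : ℕ)) := fun h => hk (Fin.ext h.symm)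
      simp [this, Matrix.smul_apply, Matrix.one_apply, hk]
  have hGF := matrix_comm_smul M F G _ hs hFG
  have hentry := congrFun (congrFun hGF ⟨i1, hi1⟩) ⟨i2, hi2⟩
  rw [Matrix.mul_apply] at hentry
  have hterm2 : ∀ k : Fin M, G ⟨i1, hi1⟩ k * F k ⟨i2, hi2⟩ =
      (∑ τ ∈ Finset.range N,
        (starRingEnd ℂ) (aCorr (c k i1) (c k i2) N τ) * ζ ^ (N - 1 + τ)) +
      (∑ τ ∈ Finset.Ico 1 N, aCorr (c k i2) (c k i1) N τ * ζ ^ (N - 1 - τ)) := by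
    intro k
    rw [hF, hG]
    have hthis := expand_mul N (c k i2) (fun n => (starRingEnd ℂ) (c k i1 n)) ζ
    simp only [Matrix.of_apply]
    rw [mul_comm (∑ n ∈ Finset.range N, (starRingEnd ℂ) (c k i1 n) * ζ ^ (N - 1 - n))
      (∑ n ∈ Finset.range N, c k i2 n * ζ ^ n), hthis]
    congr 1
    · refine Finset.sum_congr rfl fun τ _ => ?_
      congr 1
      simp only [aCorr, map_sum, map_mul, starRingEnd_self_apply]
      exact Finset.sum_congr rfl fun n _ => by ring
  rw [Finset.sum_congr rfl fun k _ => hterm2 k, Finset.sum_add_distrib,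
    Finset.sum_comm, Finset.sum_comm (s := Finset.univ)] at hentry
  have e3 : ∀ τ ∈ Finset.range N,
      (∑ k : Fin M, (starRingEnd ℂ) (aCorr (c k i1) (c k i2) N τ) * ζ ^ (N - 1 + τ)) =
      (starRingEnd ℂ) (∑ k ∈ Finset.range M, aCorr (c k i1) (c k i2) N τ) * ζ ^ (N - 1 + τ) := by
    intro τ _
    rw [← Finset.sum_mul, map_sum, ← Fin.sum_univ_eq_sum_range
      (fun k => (starRingEnd ℂ) (aCorr (c k i1) (c k i2) N τ))]
  have e4 : ∀ τ ∈ Finset.Ico 1 N,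
      (∑ k : Fin M, aCorr (c k i2) (c k i1) N τ * ζ ^ (N - 1 - τ)) =
      (∑ k ∈ Finset.range M, aCorr (c k i2) (c k i1) N τ) * ζ ^ (N - 1 - τ) := by
    intro τ _
    rw [← Finset.sum_mul, Fin.sum_univ_eq_sum_range
      (fun k => aCorr (c k i2) (c k i1) N τ)]
  rw [Finset.sum_congr rfl e3, Finset.sum_congr rfl e4] at hentry
  rw [hentry]
  simp only [Matrix.smul_apply, Matrix.one_apply, Fin.mk.injEq, smul_eq_mul]
  by_cases h : i1 = i2 <;> simp [h, mul_comm]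

theorem statement9 (M N : ℕ) (hM : 0 < M) (hN : 0 < N)
    (c : ℕ → ℕ → ℕ → ℂ)
    (hCCC : ∀ k1 < M, ∀ k2 < M, ∀ τ < N,
      ∑ m ∈ Finset.range M, aCorr (c k1 m) (c k2 m) N τ =
        if k1 = k2 ∧ τ = 0 then (M * N : ℂ) else 0) :
    ∀ i1 < M, ∀ i2 < M, ∀ τ < N,
      ∑ k ∈ Finset.range M, aCorr (c k i1) (c k i2) N τ =
        if i1 = i2 ∧ τ = 0 then (M * N : ℂ) else 0 := by
  intro i1 hi1 i2 hi2 τ0 hτ0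
  classical
  set T : ℕ → ℂ := fun τ => ∑ k ∈ Finset.range M, aCorr (c k i1) (c k i2) N τ with hT
  set T2 : ℕ → ℂ := fun τ => ∑ k ∈ Finset.range M, aCorr (c k i2) (c k i1) N τ with hT2
  set δ : ℂ := if i1 = i2 then (M * N : ℂ) else 0 with hδ
  set P : Polynomial ℂ :=
    (∑ τ ∈ Finset.range N, Polynomial.C ((starRingEnd ℂ) (T τ)) * Polynomial.X ^ (N - 1 + τ)) +
    (∑ τ ∈ Finset.Ico 1 N, Polynomial.C (T2 τ) * Polynomial.X ^ (N - 1 - τ)) -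
    Polynomial.C δ * Polynomial.X ^ (N - 1) with hP
  have hroot : ∀ ζ : ℂ, ζ ≠ 0 → P.IsRoot ζ := by
    intro ζ hζ
    have hk := key M N hM hN c hCCC i1 i2 hi1 hi2 ζ hζ
    have hkT : (∑ τ ∈ Finset.range N, (starRingEnd ℂ) (T τ) * ζ ^ (N - 1 + τ)) +
        (∑ τ ∈ Finset.Ico 1 N, T2 τ * ζ ^ (N - 1 - τ)) = δ * ζ ^ (N - 1) := by
      rw [hT, hT2, hδ]; exact hk
    simp only [Polynomial.IsRoot, hP, Polynomial.eval_sub, Polynomial.eval_add,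
      Polynomial.eval_finset_sum, Polynomial.eval_mul, Polynomial.eval_C,
      Polynomial.eval_pow, Polynomial.eval_X]
    rw [hkT, sub_self]
  have hP0 : P = 0 := by
    apply Polynomial.eq_zero_of_infinite_isRoot
    refine Set.Infinite.mono ?_ ((Set.finite_singleton (0 : ℂ)).infinite_compl)
    intro x hx
    exact hroot x hx
  have hc := congrArg (fun p : Polynomial ℂ => p.coeff (N - 1 + τ0)) hP0
  simp only [hP, Polynomial.coeff_sub, Polynomial.coeff_add, Polynomial.finset_sum_coeff,
    Polynomial.coeff_C_mul, Polynomial.coeff_X_pow, Polynomial.coeff_zero,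
    mul_ite, mul_one, mul_zero] at hc
  have h1 : (∑ τ ∈ Finset.range N,
      if N - 1 + τ0 = N - 1 + τ then (starRingEnd ℂ) (T τ) else 0) = (starRingEnd ℂ) (T τ0) := by
    rw [Finset.sum_eq_single τ0]
    · simp
    · intro τ hτ hne
      rw [if_neg (by omega)]
    · intro h
      exact absurd (Finset.mem_range.mpr hτ0) h
  have h2 : (∑ τ ∈ Finset.Ico 1 N,
      if N - 1 + τ0 = N - 1 - τ then T2 τ else 0) = 0 := by
    refine Finset.sum_eq_zero fun τ hτ => ?_
    rw [Finset.mem_Ico] at hτ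
    rw [if_neg (by omega)]
  have h3 : (if N - 1 + τ0 = N - 1 then δ else 0) = if τ0 = 0 then δ else 0 := by
    have he : (N - 1 + τ0 = N - 1) ↔ τ0 = 0 := by omega
    exact if_congr he rfl rfl
  rw [h1, h2, h3, add_zero, sub_eq_zero] at hc
  have hTτ : T τ0 = (starRingEnd ℂ) (if τ0 = 0 then δ else 0) := by
    rw [← hc, Complex.conj_conj]
  show T τ0 = if i1 = i2 ∧ τ0 = 0 then (M * N : ℂ) else 0
  rw [hTτ, hδ]
  by_cases h0 : τ0 = 0 <;> by_cases hii : i1 = i2 <;>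
    simp [h0, hii, map_mul, map_natCast]
end

section
/- Let 𝔠 = {C^0,…,C^{M−1}} be an (M,M,N)-complete complementary code with sequences c^k_m of length N, let ω = exp(2πi/M) and f_{i,j} = ω^{i·j}, and for 0 ≤ k ≤ M−1 let B̃_k be the length-M²N sequence whose entry at position i·MN + j·N + n (0 ≤ i, j ≤ M−1, 0 ≤ n ≤ N−1) equals f_{i,j} · c^j_{k,n}. Then {B̃_0, B̃_1, …, B̃_{M−1}} is an (M, M²N, (M−1)N)-Golay-ZCZ sequence set: (C1) Σ_{k=0}^{M−1} C_{B̃_k}(τ) = 0 for all 1 ≤ τ ≤ M²N−1; (C2) R_{B̃_k}(τ) = 0 for all k and all 1 ≤ τ ≤ (M−1)N; (C3) R_{B̃_{k1},B̃_{k2}}(τ) = 0 for all k1 ≠ k2 and all 0 ≤ τ ≤ (M−1)N. -/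
open Finset
open Matrix

/-- For an `(M,M,N)`-CCC with sequences `c k m` (set `k`, member `m`), the length-`M²N`
sequence `B̃ k` whose entry at position `i·MN + j·N + n` is `ω^(i·j) · c j k n`,
where `ω = exp(2πi/M)`. -/
noncomputable def Bseq (M N : ℕ) (c : ℕ → ℕ → ℕ → ℂ) (k : ℕ) : ℕ → ℂ :=
  fun n =>
    Complex.exp (2 * Real.pi * Complex.I * ((n / (M * N) : ℕ) : ℂ) *
        (((n % (M * N)) / N : ℕ) : ℂ) / (M : ℂ)) *
      c ((n % (M * N)) / N) k (n % N)


noncomputable def om (M : ℕ) : ℂ := Complex.exp (2 * Real.pi * Complex.I / M)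

lemma om_prim (M : ℕ) (hM : 0 < M) : IsPrimitiveRoot (om M) M :=
  Complex.isPrimitiveRoot_exp M hM.ne'

lemma om_conj (M : ℕ) : (starRingEnd ℂ) (om M) = (om M)⁻¹ := by
  rw [om, ← Complex.exp_conj, ← Complex.exp_neg]
  congr 1
  simp only [map_div₀, _root_.map_mul, Complex.conj_I, Complex.conj_ofReal, map_ofNat, map_natCast]
  ring

lemma conj_om_pow (M a : ℕ) : (starRingEnd ℂ) (om M ^ a) = om M ^ (-(a:ℤ)) := by
  rw [_root_.map_pow, om_conj, _root_.inv_pow, ← zpow_natCast, ← _root_.zpow_neg]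

lemma geom_prim {K : ℕ} {ζ : ℂ} (hζ : IsPrimitiveRoot ζ K) {s : ℤ} (hs : ¬ (K:ℤ) ∣ s) :
    ∑ q ∈ range K, (ζ ^ s) ^ q = 0 := by
  have hne : ζ ^ s ≠ 1 := fun h => hs ((hζ.zpow_eq_one_iff_dvd s).mp h)
  have hpow : (ζ ^ s) ^ K = 1 := by
    rw [← zpow_natCast (ζ ^ s) K, ← _root_.zpow_mul, mul_comm, _root_.zpow_mul, zpow_natCast, hζ.pow_eq_one,
      _root_.one_zpow]
  rw [geom_sum_eq hne, hpow]
  simp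

lemma sum_block (a b : ℕ) (f : ℕ → ℂ) :
    ∑ p ∈ range (a*b), f p = ∑ i ∈ range a, ∑ j ∈ range b, f (i*b + j) := by
  induction a with
  | zero => simp
  | succ a ih =>
      rw [Nat.succ_mul, sum_range_add, ih, sum_range_succ]

lemma tri_swap (N : ℕ) (g : ℕ → ℕ → ℂ) :
    ∑ a ∈ range N, ∑ b ∈ range (N - a), g a b = ∑ b ∈ range N, ∑ a ∈ range (N - b), g a b := by
  rw [Finset.sum_sigma', Finset.sum_sigma']
  refine sum_nbij' (fun x => ⟨x.2, x.1⟩) (fun x => ⟨x.2, x.1⟩) ?_ ?_ (fun _ _ => rfl)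
    (fun _ _ => rfl) (fun _ _ => rfl) <;>
    simp only [Sigma.forall, mem_sigma, mem_range] <;> intro a b h <;> omega

lemma sum_ite_lt (R K : ℕ) (h : R ≤ K) (F : ℕ → ℂ) :
    ∑ i ∈ range K, (if i < R then F i else 0) = ∑ i ∈ range R, F i := by
  rw [← Finset.sum_subset (Finset.range_subset_range.mpr h)
    (fun x _ hnx => by rw [if_neg]; simp only [mem_range] at hnx; omega)]
  exact sum_congr rfl fun i hi => if_pos (mem_range.mp hi)

lemma blt {M N : ℕ} (hN : 0 < N) (a b e : ℕ) (hb : b < M) (he : e < N) :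
    a*(M*N) + b*N + e < M*(M*N) ↔ a < M := by
  constructor
  · intro h
    by_contra hc
    push_neg at hc
    have h1 : M*(M*N) ≤ a*(M*N) := Nat.mul_le_mul_right _ hc
    omega
  · intro h
    calc a*(M*N) + b*N + e < a*(M*N) + b*N + N := by omega
      _ = a*(M*N) + (b+1)*N := by ring
      _ ≤ a*(M*N) + M*N := by
          exact Nat.add_le_add_left (Nat.mul_le_mul_right _ hb) _
      _ = (a+1)*(M*N) := by ring
      _ ≤ M*(M*N) := Nat.mul_le_mul_right _ h

lemma tri (N : ℕ) (f : ℕ → ℕ → ℂ) :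
    ∑ n ∈ range N, ∑ n' ∈ range N, f n n' =
      (∑ t ∈ range N, ∑ n ∈ range (N - t), f (n + t) n) +
      ∑ t ∈ Ico 1 N, ∑ n ∈ range (N - t), f n (n + t) := by
  have hsplit : ∀ n ∈ range N, ∑ n' ∈ range N, f n n' =
      (∑ n' ∈ Finset.Ico 0 (n+1), f n n') + ∑ n' ∈ Finset.Ico (n+1) N, f n n' := by
    intro n hn
    rw [range_eq_Ico, ← Finset.sum_Ico_consecutive _ (Nat.zero_le _)
      (Nat.succ_le_of_lt (mem_range.mp hn))]
  rw [sum_congr rfl hsplit, sum_add_distrib]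
  congr 1
  · -- part A
    calc ∑ n ∈ range N, ∑ n' ∈ Finset.Ico 0 (n+1), f n n'
        = ∑ n' ∈ range N, ∑ n ∈ Finset.Ico n' N, f n n' := by
          rw [range_eq_Ico, ← Finset.sum_Ico_Ico_comm 0 N (fun i j => f j i)]
      _ = ∑ n' ∈ range N, ∑ k ∈ range (N - n'), f (n' + k) n' := by
          exact sum_congr rfl fun n' _ => Finset.sum_Ico_eq_sum_range (fun n => f n n') n' N
      _ = ∑ t ∈ range N, ∑ n ∈ range (N - t), f (n + t) n := by
          rw [tri_swap N (fun n' k => f (n' + k) n')]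
  · -- part B
    rcases Nat.eq_zero_or_pos N with h0 | h0
    · subst h0; simp
    obtain ⟨N', rfl⟩ : ∃ N', N = N' + 1 := ⟨N - 1, by omega⟩
    calc ∑ n ∈ range (N'+1), ∑ n' ∈ Finset.Ico (n+1) (N'+1), f n n'
        = ∑ n ∈ range (N'+1), ∑ k ∈ range (N' - n), f n (n+1+k) := by
          refine sum_congr rfl fun n _ => ?_
          rw [Finset.sum_Ico_eq_sum_range]
          simp [Nat.succ_sub_succ]
      _ = ∑ n ∈ range N', ∑ k ∈ range (N' - n), f n (n+1+k) := by
          rw [sum_range_succ]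
          simp
      _ = ∑ k ∈ range N', ∑ n ∈ range (N' - k), f n (n+1+k) := tri_swap N' _
      _ = ∑ t ∈ Ico 1 (N'+1), ∑ n ∈ range (N'+1 - t), f n (n + t) := by
          rw [Finset.sum_Ico_eq_sum_range (fun t => ∑ n ∈ range (N'+1 - t), f n (n + t)) 1 (N'+1)]
          refine sum_congr (by rw [Nat.add_sub_cancel]) fun k _ => ?_
          refine sum_congr (by rw [show N'+1-(1+k) = N'-k by omega]) fun n _ => ?_
          rw [show n+(1+k) = n+1+k by omega]

lemma Bval (M N : ℕ) (hM : 0 < M) (hN : 0 < N) (c : ℕ → ℕ → ℕ → ℂ) (k a b e : ℕ)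
    (hb : b < M) (he : e < N) :
    Bseq M N c k (a*(M*N) + b*N + e) = om M ^ (a*b) * c b k e := by
  have hMN : 0 < M*N := Nat.mul_pos hM hN
  have hblt : b*N + e < M*N := by
    calc b*N + e < (b+1)*N := by rw [add_mul, one_mul]; omega
      _ ≤ M*N := Nat.mul_le_mul_right _ hb
  have h1 : (a*(M*N) + b*N + e) / (M*N) = a := by
    rw [show a*(M*N)+b*N+e = (M*N)*a + (b*N+e) by ring, Nat.mul_add_div hMN,
      Nat.div_eq_of_lt hblt, Nat.add_zero]
  have h2 : (a*(M*N) + b*N + e) % (M*N) = b*N + e := by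
    rw [show a*(M*N)+b*N+e = (M*N)*a + (b*N+e) by ring, Nat.mul_add_mod,
      Nat.mod_eq_of_lt hblt]
  have h3 : (b*N+e)/N = b := by
    rw [show b*N+e = N*b+e by ring, Nat.mul_add_div hN, Nat.div_eq_of_lt he, Nat.add_zero]
  have h4 : (a*(M*N)+b*N+e) % N = e := by
    rw [show a*(M*N)+b*N+e = N*(a*M+b)+e by ring, Nat.mul_add_mod, Nat.mod_eq_of_lt he]
  unfold Bseq
  rw [h1, h2, h3, h4, om]
  congr 1
  rw [← Complex.exp_nat_mul]
  congr 1
  push_cast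
  ring

lemma BvalMod (M N : ℕ) (hM : 0 < M) (hN : 0 < N) (c : ℕ → ℕ → ℕ → ℂ) (k a b e : ℕ)
    (hb : b < M) (he : e < N) :
    Bseq M N c k ((a*(M*N) + b*N + e) % (M*(M*N))) = om M ^ (a*b) * c b k e := by
  have ha := Nat.div_add_mod a M
  have h1 : (a*(M*N)+b*N+e) % (M*(M*N)) = (a%M)*(M*N)+b*N+e := by
    have hkey : a*(M*N)+b*N+e = (M*(M*N))*(a/M) + ((a%M)*(M*N)+b*N+e) := by
      calc a*(M*N)+b*N+e = (M*(a/M)+a%M)*(M*N)+b*N+e := by rw [ha]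
        _ = (M*(M*N))*(a/M) + ((a%M)*(M*N)+b*N+e) := by ring
    rw [hkey, Nat.mul_add_mod, Nat.mod_eq_of_lt ((blt hN _ b e hb he).mpr (Nat.mod_lt a hM))]
  rw [h1, Bval M N hM hN c k _ b e hb he]
  have h2 : om M ^ (a*b) = om M ^ ((M*(a/M)+a%M)*b) := by rw [ha]
  rw [h2, show (M*(a/M)+a%M)*b = M*((a/M)*b) + (a%M)*b by ring, pow_add,
    pow_mul (om M) M ((a/M)*b), (om_prim M hM).pow_eq_one, one_pow, one_mul]

lemma key_expand (M N q : ℕ) (ζ : ℂ) (hζ0 : ζ ≠ 0)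
    (hζc : ∀ a : ℕ, (starRingEnd ℂ) (ζ^a) = ζ^(-(a:ℤ))) (x y : ℕ → ℕ → ℂ) :
    ∑ m ∈ range M, (∑ n ∈ range N, x m n * ζ^(q*n)) *
        (starRingEnd ℂ) (∑ n ∈ range N, y m n * ζ^(q*n)) =
    (∑ t ∈ range N, ζ^(q*t) *
        (starRingEnd ℂ) (∑ m ∈ range M, ∑ n ∈ range (N-t), y m n * (starRingEnd ℂ) (x m (n+t))))
      + ∑ t ∈ Ico 1 N, ζ^(-(q*t:ℤ)) *
        (∑ m ∈ range M, ∑ n ∈ range (N-t), x m n * (starRingEnd ℂ) (y m (n+t))) := by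
  calc ∑ m ∈ range M, (∑ n ∈ range N, x m n * ζ^(q*n)) *
        (starRingEnd ℂ) (∑ n ∈ range N, y m n * ζ^(q*n))
      = ∑ m ∈ range M, ∑ n ∈ range N, ∑ n' ∈ range N,
          (x m n * (starRingEnd ℂ) (y m n')) * (ζ^(q*n) * ζ^(-(q*n':ℤ))) := by
        refine sum_congr rfl fun m _ => ?_
        rw [map_sum, Finset.sum_mul_sum]
        refine sum_congr rfl fun n _ => sum_congr rfl fun n' _ => ?_
        rw [_root_.map_mul, hζc]
        push_cast
        ring
    _ = ∑ n ∈ range N, ∑ n' ∈ range N, ∑ m ∈ range M,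
          (x m n * (starRingEnd ℂ) (y m n')) * (ζ^(q*n) * ζ^(-(q*n':ℤ))) := by
        rw [Finset.sum_comm]
        exact sum_congr rfl fun n _ => Finset.sum_comm
    _ = (∑ t ∈ range N, ∑ n ∈ range (N-t), ∑ m ∈ range M,
          (x m (n+t) * (starRingEnd ℂ) (y m n)) * (ζ^(q*(n+t)) * ζ^(-(q*n:ℤ))))
      + ∑ t ∈ Ico 1 N, ∑ n ∈ range (N-t), ∑ m ∈ range M,
          (x m n * (starRingEnd ℂ) (y m (n+t))) * (ζ^(q*n) * ζ^(-(q*(n+t):ℤ))) :=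
        tri N _
    _ = _ := by
        congr 1
        · refine sum_congr rfl fun t _ => ?_
          have hph : ∀ n : ℕ, ζ^(q*(n+t)) * ζ^(-(q*n:ℤ)) = ζ^(q*t) := fun n => by
            rw [← zpow_natCast ζ (q*(n+t)), ← zpow_add₀ hζ0, ← zpow_natCast ζ (q*t)]
            congr 1
            push_cast
            ring
          rw [map_sum]
          rw [Finset.mul_sum]
          rw [Finset.sum_comm]
          refine sum_congr rfl fun m _ => ?_
          rw [map_sum, Finset.mul_sum]
          refine sum_congr rfl fun n _ => ?_
          rw [hph n, _root_.map_mul, Complex.conj_conj]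
          ring
        · refine sum_congr rfl fun t _ => ?_
          have hph : ∀ n : ℕ, ζ^(q*n) * ζ^(-(q*(n+t):ℤ)) = ζ^(-(q*t:ℤ)) := fun n => by
            rw [← zpow_natCast ζ (q*n), ← zpow_add₀ hζ0]
            congr 1
            push_cast
            ring
          rw [Finset.mul_sum, Finset.sum_comm]
          refine sum_congr rfl fun m _ => ?_
          rw [Finset.mul_sum]
          refine sum_congr rfl fun n _ => ?_
          rw [hph n]
          ring


lemma not_dvd_of_lt {K : ℕ} {s : ℤ} (hs : s ≠ 0) (hb : s.natAbs < K) : ¬ (K:ℤ) ∣ s := by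
  intro h
  have h0 := Int.eq_zero_of_dvd_of_natAbs_lt_natAbs h (by omega)
  omega

lemma transpose_CCC (M N : ℕ) (hM : 0 < M) (hN : 0 < N) (c : ℕ → ℕ → ℕ → ℂ)
    (hCCC : ∀ k1 < M, ∀ k2 < M, ∀ τ < N,
      ∑ m ∈ Finset.range M, aCorr (c k1 m) (c k2 m) N τ =
        if k1 = k2 ∧ τ = 0 then (M * N : ℂ) else 0) :
    ∀ m1 < M, ∀ m2 < M, ∀ τ < N,
      ∑ k ∈ Finset.range M, aCorr (c k m1) (c k m2) N τ =
        if m1 = m2 ∧ τ = 0 then (M * N : ℂ) else 0 := by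
  have hK0 : 0 < 2*N := by omega
  set ζ := om (2*N) with hζdef
  have hζ : IsPrimitiveRoot ζ (2*N) := om_prim _ hK0
  have hζ0 : ζ ≠ 0 := by rw [hζdef, om]; exact Complex.exp_ne_zero _
  have hζc : ∀ a : ℕ, (starRingEnd ℂ) (ζ^a) = ζ^(-(a:ℤ)) := fun a => conj_om_pow _ a
  set A : ℕ → Matrix (Fin M) (Fin M) ℂ :=
    fun q => Matrix.of (fun k m : Fin M => ∑ n ∈ range N, c k m n * ζ^(q*n)) with hA
  have hMN0 : ((M:ℂ) * N) ≠ 0 := by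
    simp only [ne_eq, mul_eq_zero, Nat.cast_eq_zero]
    omega
  -- Step 1
  have step1 : ∀ q, A q * (A q)ᴴ = ((M:ℂ) * N) • 1 := by
    intro q
    ext k1 k2
    rw [Matrix.mul_apply]
    have : ∀ m : Fin M, A q k1 m * (A q)ᴴ m k2 =
        (fun m : ℕ => (∑ n ∈ range N, c k1 m n * ζ^(q*n)) *
          (starRingEnd ℂ) (∑ n ∈ range N, c k2 m n * ζ^(q*n))) (m : ℕ) := fun m => by
      rw [Matrix.conjTranspose_apply]
      rfl
    rw [Finset.sum_congr rfl (fun m _ => this m)]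
    rw [Fin.sum_univ_eq_sum_range (fun m : ℕ => (∑ n ∈ range N, c k1 m n * ζ^(q*n)) *
          (starRingEnd ℂ) (∑ n ∈ range N, c k2 m n * ζ^(q*n))) M]
    rw [key_expand M N q ζ hζ0 hζc (fun m n => c k1 m n) (fun m n => c k2 m n)]
    have hA2 : ∀ t ∈ range N,
        (∑ m ∈ range M, ∑ n ∈ range (N-t), c k2 m n * (starRingEnd ℂ) (c k1 m (n+t))) =
        if (k2 : ℕ) = (k1 : ℕ) ∧ t = 0 then (M * N : ℂ) else 0 := fun t ht => by
      rw [← hCCC k2 k2.2 k1 k1.2 t (mem_range.mp ht)]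
      rfl
    have hB2 : ∀ t ∈ Ico 1 N,
        (∑ m ∈ range M, ∑ n ∈ range (N-t), c k1 m n * (starRingEnd ℂ) (c k2 m (n+t))) = 0 := by
      intro t ht
      rw [mem_Ico] at ht
      have := hCCC k1 k1.2 k2 k2.2 t ht.2
      rw [show (∑ m ∈ range M, aCorr (c ↑k1 m) (c ↑k2 m) N t) =
        ∑ m ∈ range M, ∑ n ∈ range (N-t), c k1 m n * (starRingEnd ℂ) (c k2 m (n+t)) from rfl]
        at this
      rw [this, if_neg (by omega)]
    calc (∑ t ∈ range N, ζ^(q*t) * (starRingEnd ℂ)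
            (∑ m ∈ range M, ∑ n ∈ range (N-t), c k2 m n * (starRingEnd ℂ) (c k1 m (n+t))))
          + ∑ t ∈ Ico 1 N, ζ^(-(q*t:ℤ)) *
            (∑ m ∈ range M, ∑ n ∈ range (N-t), c k1 m n * (starRingEnd ℂ) (c k2 m (n+t)))
        = (∑ t ∈ range N, ζ^(q*t) *
            (if (k2 : ℕ) = (k1 : ℕ) ∧ t = 0 then (M * N : ℂ) else 0)) + 0 := by
          congr 1
          · refine sum_congr rfl fun t ht => ?_
            rw [hA2 t ht]
            congr 1
            split_ifs with h
            · rw [_root_.map_mul, Complex.conj_natCast, Complex.conj_natCast]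
            · rw [map_zero]
          · exact sum_eq_zero fun t ht => by rw [hB2 t ht, mul_zero]
      _ = ((M:ℂ) * N) • (1 : Matrix (Fin M) (Fin M) ℂ) k1 k2 := by
          rw [add_zero, Finset.sum_eq_single 0]
          · simp only [Nat.mul_zero, pow_zero, one_mul, Matrix.smul_apply, Matrix.one_apply,
              smul_eq_mul]
            by_cases h : k1 = k2
            · subst h
              simp
            · rw [if_neg (fun hc => h (Fin.ext hc.1.symm)), if_neg h, mul_zero]
          · intro t _ ht0
            rw [if_neg (fun hc => ht0 hc.2), mul_zero]
          · intro h0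
            exact absurd (mem_range.mpr hN) h0
  -- Step 2
  have step2 : ∀ q, (A q)ᴴ * A q = ((M:ℂ) * N) • 1 := by
    intro q
    have h2 : A q * (((M:ℂ)*N)⁻¹ • (A q)ᴴ) = 1 := by
      rw [Matrix.mul_smul, step1 q, smul_smul, inv_mul_cancel₀ hMN0, one_smul]
    have h3 := mul_eq_one_comm.mp h2
    calc (A q)ᴴ * A q = ((M:ℂ)*N) • ((((M:ℂ)*N)⁻¹ • (A q)ᴴ) * A q) := by
          rw [Matrix.smul_mul, smul_smul, mul_inv_cancel₀ hMN0, one_smul]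
      _ = ((M:ℂ)*N) • 1 := by rw [h3]
  -- Step 3
  intro m1 hm1 m2 hm2 τ hτ
  have h2N0 : ((2*N:ℕ):ℂ) ≠ 0 := by
    simp only [ne_eq, Nat.cast_eq_zero]
    omega
  set S := ∑ k ∈ range M, aCorr (c k m1) (c k m2) N τ with hS
  have E2 : ∀ q, ((A q)ᴴ * A q) ⟨m1,hm1⟩ ⟨m2,hm2⟩ =
      ∑ k ∈ range M, (starRingEnd ℂ) (∑ n ∈ range N, c k m1 n * ζ^(q*n)) *
        (∑ n' ∈ range N, c k m2 n' * ζ^(q*n')) := by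
    intro q
    rw [Matrix.mul_apply]
    have h1 : ∀ k : Fin M, (A q)ᴴ ⟨m1,hm1⟩ k * A q k ⟨m2,hm2⟩ =
        (fun k : ℕ => (starRingEnd ℂ) (∑ n ∈ range N, c k m1 n * ζ^(q*n)) *
          (∑ n' ∈ range N, c k m2 n' * ζ^(q*n'))) (k:ℕ) := fun k => by
      rw [Matrix.conjTranspose_apply]
      rfl
    rw [Finset.sum_congr rfl (fun k _ => h1 k)]
    exact Fin.sum_univ_eq_sum_range (fun k : ℕ => (starRingEnd ℂ)
      (∑ n ∈ range N, c k m1 n * ζ^(q*n)) * (∑ n' ∈ range N, c k m2 n' * ζ^(q*n'))) M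
  have hEq : ∑ q ∈ range (2*N), ζ^(-((q*τ:ℕ):ℤ)) * ((A q)ᴴ * A q) ⟨m1,hm1⟩ ⟨m2,hm2⟩
      = ((2*N:ℕ):ℂ) * (starRingEnd ℂ) S := by
    calc ∑ q ∈ range (2*N), ζ^(-((q*τ:ℕ):ℤ)) * ((A q)ᴴ * A q) ⟨m1,hm1⟩ ⟨m2,hm2⟩
        = ∑ q ∈ range (2*N), ∑ k ∈ range M, ∑ n ∈ range N, ∑ n' ∈ range N,
            ((starRingEnd ℂ) (c k m1 n) * c k m2 n') * ζ^((((n':ℕ):ℤ)-(n:ℤ)-(τ:ℤ))*(q:ℤ)) := by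
          refine sum_congr rfl fun q _ => ?_
          rw [E2 q, Finset.mul_sum]
          refine sum_congr rfl fun k _ => ?_
          rw [map_sum, Finset.sum_mul_sum, Finset.mul_sum]
          refine sum_congr rfl fun n _ => ?_
          rw [Finset.mul_sum]
          refine sum_congr rfl fun n' _ => ?_
          rw [_root_.map_mul, hζc]
          have hph : ζ^(-((q*τ:ℕ):ℤ)) * ζ^(-((q*n:ℕ):ℤ)) * ζ^(((q*n':ℕ):ℤ))
              = ζ^((((n':ℕ):ℤ)-(n:ℤ)-(τ:ℤ))*(q:ℤ)) := by
            rw [← zpow_add₀ hζ0, ← zpow_add₀ hζ0]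
            congr 1
            push_cast
            ring
          rw [← hph]
          simp only [← zpow_natCast ζ]
          ring
      _ = ∑ k ∈ range M, ∑ n ∈ range N, ∑ n' ∈ range N, ∑ q ∈ range (2*N),
            ((starRingEnd ℂ) (c k m1 n) * c k m2 n') * ζ^((((n':ℕ):ℤ)-(n:ℤ)-(τ:ℤ))*(q:ℤ)) := by
          rw [Finset.sum_comm]
          refine sum_congr rfl fun k _ => ?_
          rw [Finset.sum_comm]
          refine sum_congr rfl fun n _ => ?_
          rw [Finset.sum_comm]
      _ = ∑ k ∈ range M, ∑ n ∈ range N, ∑ n' ∈ range N,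
            (if n' = n + τ then ((starRingEnd ℂ) (c k m1 n) * c k m2 (n+τ)) * ((2*N:ℕ):ℂ)
              else 0) := by
          refine sum_congr rfl fun k _ => sum_congr rfl fun n hn => sum_congr rfl fun n' hn' => ?_
          rw [← Finset.mul_sum]
          have hrw : ∑ q ∈ range (2*N), ζ^((((n':ℕ):ℤ)-(n:ℤ)-(τ:ℤ))*(q:ℤ))
              = ∑ q ∈ range (2*N), (ζ^(((n':ℕ):ℤ)-(n:ℤ)-(τ:ℤ)))^q :=
            sum_congr rfl fun q _ => by rw [_root_.zpow_mul, zpow_natCast]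
          by_cases h : n' = n + τ
          · subst h
            rw [if_pos rfl, hrw]
            have hz : (((n+τ:ℕ):ℤ)-(n:ℤ)-(τ:ℤ)) = 0 := by push_cast; ring
            rw [hz]
            simp
          · rw [if_neg h, hrw]
            rw [mem_range] at hn hn'
            have hs : ¬ (((2*N:ℕ):ℤ) ∣ (((n':ℕ):ℤ)-(n:ℤ)-(τ:ℤ))) :=
              not_dvd_of_lt (by omega) (by omega)
            rw [geom_prim hζ hs, mul_zero]
      _ = ∑ k ∈ range M, ∑ n ∈ range N,
            (if n < N - τ then ((starRingEnd ℂ) (c k m1 n) * c k m2 (n+τ)) * ((2*N:ℕ):ℂ)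
              else 0) := by
          refine sum_congr rfl fun k _ => sum_congr rfl fun n _ => ?_
          rw [Finset.sum_ite_eq' (range N) (n+τ)
            (fun _ => ((starRingEnd ℂ) (c k m1 n) * c k m2 (n+τ)) * ((2*N:ℕ):ℂ))]
          exact if_congr (by rw [mem_range]; omega) rfl rfl
      _ = ∑ k ∈ range M, ∑ n ∈ range (N-τ),
            ((starRingEnd ℂ) (c k m1 n) * c k m2 (n+τ)) * ((2*N:ℕ):ℂ) := by
          exact sum_congr rfl fun k _ => sum_ite_lt (N-τ) N (by omega) _
      _ = ((2*N:ℕ):ℂ) * (starRingEnd ℂ) S := by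
          rw [hS, map_sum, Finset.mul_sum]
          refine sum_congr rfl fun k _ => ?_
          rw [show aCorr (c k m1) (c k m2) N τ
            = ∑ n ∈ range (N-τ), c k m1 n * (starRingEnd ℂ) (c k m2 (n+τ)) from rfl]
          rw [map_sum, Finset.mul_sum]
          refine sum_congr rfl fun n _ => ?_
          rw [_root_.map_mul, Complex.conj_conj]
          ring
  have hE1 : ∑ q ∈ range (2*N), ζ^(-((q*τ:ℕ):ℤ)) * ((A q)ᴴ * A q) ⟨m1,hm1⟩ ⟨m2,hm2⟩
      = ((2*N:ℕ):ℂ) * (if m1 = m2 ∧ τ = 0 then ((M:ℂ)*(N:ℂ)) else 0) := by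
    have hent : ∀ q : ℕ, ((A q)ᴴ * A q) ⟨m1,hm1⟩ ⟨m2,hm2⟩
        = if m1 = m2 then ((M:ℂ)*(N:ℂ)) else 0 := fun q => by
      rw [step2 q]
      simp only [Matrix.smul_apply, Matrix.one_apply, smul_eq_mul]
      by_cases h : m1 = m2
      · rw [if_pos (Fin.mk_eq_mk.mpr h), if_pos h, mul_one]
      · rw [if_neg (fun hc => h (Fin.mk_eq_mk.mp hc)), if_neg h, mul_zero]
    rw [Finset.sum_congr rfl (fun q _ => by rw [hent q]), ← Finset.sum_mul]
    by_cases hτ0 : τ = 0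
    · subst hτ0
      by_cases h : m1 = m2 <;> simp [h, mul_comm]
    · have hsum0 : ∑ q ∈ range (2*N), ζ^(-((q*τ:ℕ):ℤ)) = 0 := by
        have hrw : ∀ q ∈ range (2*N), ζ^(-((q*τ:ℕ):ℤ)) = (ζ^(-(τ:ℤ)))^q := fun q _ => by
          rw [show -((q*τ:ℕ):ℤ) = (-(τ:ℤ))*(q:ℤ) by push_cast; ring, _root_.zpow_mul, zpow_natCast]
        rw [Finset.sum_congr rfl hrw]
        exact geom_prim hζ (not_dvd_of_lt (by omega) (by omega))
      rw [hsum0, zero_mul, if_neg (fun hc => hτ0 hc.2), mul_zero]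
  have hconjS : (starRingEnd ℂ) S = if m1 = m2 ∧ τ = 0 then ((M:ℂ)*(N:ℂ)) else 0 :=
    mul_left_cancel₀ h2N0 (hEq.symm.trans hE1)
  calc S = (starRingEnd ℂ) ((starRingEnd ℂ) S) := (Complex.conj_conj S).symm
    _ = _ := by
        rw [hconjS]
        split_ifs
        · rw [_root_.map_mul, Complex.conj_natCast, Complex.conj_natCast]
        · rw [map_zero]

lemma om_ne (M : ℕ) : om M ≠ 0 := Complex.exp_ne_zero _

lemma not_dvd_sub {M j b : ℕ} (hj : j < M) (hb : b < M) (hne : j ≠ b) :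
    ¬ ((M:ℤ) ∣ ((j:ℤ) - (b:ℤ))) :=
  not_dvd_of_lt (by omega) (by omega)

lemma isum (M : ℕ) (hM : 0 < M) (j b d : ℕ) (hjb : ¬ ((M:ℤ) ∣ ((j:ℤ) - (b:ℤ)))) :
    ∑ i ∈ range M, om M ^ (i*j) * (starRingEnd ℂ) (om M ^ ((i+d)*b)) = 0 := by
  have h1 : ∀ i ∈ range M, om M ^ (i*j) * (starRingEnd ℂ) (om M ^ ((i+d)*b))
      = om M ^ (-((d*b:ℕ):ℤ)) * (om M ^ ((j:ℤ)-(b:ℤ)))^i := fun i _ => by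
    rw [conj_om_pow, ← zpow_natCast (om M) (i*j), ← zpow_add₀ (om_ne M),
      ← zpow_natCast (om M ^ ((j:ℤ)-(b:ℤ))) i, ← _root_.zpow_mul, ← zpow_add₀ (om_ne M)]
    congr 1
    push_cast
    ring
  rw [sum_congr rfl h1, ← Finset.mul_sum, geom_prim (om_prim M hM) hjb, mul_zero]

lemma isum0 (M : ℕ) (hM : 0 < M) (j b : ℕ) (hjb : ¬ ((M:ℤ) ∣ ((j:ℤ) - (b:ℤ)))) :
    ∑ i ∈ range M, om M ^ (i*j) * (starRingEnd ℂ) (om M ^ (i*b)) = 0 := by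
  have := isum M hM j b 0 hjb
  simpa using this

lemma isum_diag (M j : ℕ) :
    ∑ i ∈ range M, om M ^ (i*j) * (starRingEnd ℂ) (om M ^ (i*j)) = (M:ℂ) := by
  have h1 : ∀ i ∈ range M, om M ^ (i*j) * (starRingEnd ℂ) (om M ^ (i*j)) = 1 := fun i _ => by
    rw [conj_om_pow, ← zpow_natCast (om M) (i*j), ← zpow_add₀ (om_ne M)]
    simp
  rw [sum_congr rfl h1, sum_const, card_range, nsmul_eq_mul, mul_one]

lemma main_pcorr (M N : ℕ) (hM : 0 < M) (hN : 0 < N) (c : ℕ → ℕ → ℕ → ℂ)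
    (hT : ∀ m1 < M, ∀ m2 < M, ∀ τ < N,
      ∑ k ∈ Finset.range M, aCorr (c k m1) (c k m2) N τ =
        if m1 = m2 ∧ τ = 0 then (M * N : ℂ) else 0)
    (k1 k2 τ : ℕ) (hk1 : k1 < M) (hk2 : k2 < M) (hτ : τ ≤ (M-1)*N)
    (hne : ¬(k1 = k2 ∧ τ = 0)) :
    pCorr (Bseq M N c k1) (Bseq M N c k2) (M^2*N) τ = 0 := by
  have hM2 : 2 ≤ M := by
    rcases Nat.lt_or_ge M 2 with h | h
    · exfalso
      have hM1 : M = 1 := by omega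
      subst hM1
      simp only [Nat.sub_self, Nat.zero_mul, Nat.le_zero] at hτ
      exact hne ⟨by omega, hτ⟩
    · exact h
  obtain ⟨u, t, hτeq, ht⟩ : ∃ u t, τ = u*N + t ∧ t < N :=
    ⟨τ/N, τ%N, by rw [Nat.mul_comm]; exact (Nat.div_add_mod τ N).symm, Nat.mod_lt _ hN⟩
  have huM : u ≤ M - 1 := by
    have h1 : u*N ≤ (M-1)*N := by omega
    exact Nat.le_of_mul_le_mul_right h1 hN
  have hu2 : t ≠ 0 → u + 1 ≤ M - 1 := by
    intro h0
    have h1 : u*N < (M-1)*N := by omega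
    have h2 := lt_of_mul_lt_mul_right h1 (Nat.zero_le N)
    omega
  rw [pCorr, show M^2*N = M*(M*N) by ring]
  rw [sum_block M (M*N) _]
  rw [Finset.sum_congr rfl (fun i _ => sum_block M N _)]
  rw [Finset.sum_comm]
  rw [Finset.sum_congr rfl (fun j _ => Finset.sum_comm)]
  have hsplitN : ∀ F : ℕ → ℂ, ∑ n ∈ range N, F n
      = ∑ n ∈ range (N-t), F n + ∑ m ∈ range t, F ((N-t)+m) := fun F => by
    conv_lhs => rw [show N = (N-t)+t from by omega]
    exact sum_range_add F (N-t) t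
  have hsplit_all : ∀ (G : ℕ → ℕ → ℂ), ∑ j ∈ range M, ∑ n ∈ range N, G j n
      = (∑ j ∈ range M, ∑ n ∈ range (N-t), G j n)
        + ∑ j ∈ range M, ∑ m ∈ range t, G j ((N-t)+m) := fun G => by
    rw [← sum_add_distrib]
    exact sum_congr rfl fun j _ => hsplitN (G j)
  rw [hsplit_all]
  -- wrap part vanishes
  have wrap0 : ∀ j ∈ range M, ∑ m ∈ range t,
      ∑ i ∈ range M, Bseq M N c k1 (i*(M*N)+(j*N+((N-t)+m))) *
        (starRingEnd ℂ) (Bseq M N c k2 ((i*(M*N)+(j*N+((N-t)+m))+τ) % (M*(M*N)))) = 0 := by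
    intro j hj
    rw [mem_range] at hj
    refine sum_eq_zero fun m hm => ?_
    rw [mem_range] at hm
    have ht1 : 1 ≤ t := by omega
    have hu1 : u + 1 ≤ M - 1 := hu2 (by omega)
    obtain ⟨s, hs⟩ : ∃ s, N = s + t := ⟨N - t, by omega⟩
    have hNts : N - t = s := by omega
    by_cases hb : j + u + 1 < M
    · have hterm : ∀ i ∈ range M,
          Bseq M N c k1 (i*(M*N)+(j*N+((N-t)+m))) *
            (starRingEnd ℂ) (Bseq M N c k2 ((i*(M*N)+(j*N+((N-t)+m))+τ) % (M*(M*N)))) =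
          (om M ^ (i*j) * (starRingEnd ℂ) (om M ^ (i*(j+u+1)))) *
            (c j k1 ((N-t)+m) * (starRingEnd ℂ) (c (j+u+1) k2 m)) := by
        intro i _
        have harg2 : i*(M*N)+(j*N+((N-t)+m))+τ = i*(M*N)+(j+u+1)*N+m := by
          rw [hτeq, hNts, hs]
          ring
        rw [harg2, show i*(M*N)+(j*N+((N-t)+m)) = i*(M*N)+j*N+((N-t)+m) by ring,
          Bval M N hM hN c k1 i j ((N-t)+m) hj (by omega),
          BvalMod M N hM hN c k2 i (j+u+1) m hb (by omega), _root_.map_mul]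
        ring
      rw [sum_congr rfl hterm, ← Finset.sum_mul,
        isum0 M hM j (j+u+1) (not_dvd_sub hj hb (by omega)), zero_mul]
    · obtain ⟨w, hw⟩ : ∃ w, j+u+1 = M+w := ⟨j+u+1-M, by omega⟩
      have hwM : w < M := by omega
      have hterm : ∀ i ∈ range M,
          Bseq M N c k1 (i*(M*N)+(j*N+((N-t)+m))) *
            (starRingEnd ℂ) (Bseq M N c k2 ((i*(M*N)+(j*N+((N-t)+m))+τ) % (M*(M*N)))) =
          (om M ^ (i*j) * (starRingEnd ℂ) (om M ^ ((i+1)*w))) *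
            (c j k1 ((N-t)+m) * (starRingEnd ℂ) (c w k2 m)) := by
        intro i _
        have harg2 : i*(M*N)+(j*N+((N-t)+m))+τ = (i+1)*(M*N)+w*N+m := by
          have hstep : i*(M*N)+(j*N+((N-t)+m))+τ = i*(M*N)+(j+u+1)*N+m := by
            rw [hτeq, hNts, hs]
            ring
          rw [hstep, hw]
          ring
        rw [harg2, show i*(M*N)+(j*N+((N-t)+m)) = i*(M*N)+j*N+((N-t)+m) by ring,
          Bval M N hM hN c k1 i j ((N-t)+m) hj (by omega),
          BvalMod M N hM hN c k2 (i+1) w m hwM (by omega), _root_.map_mul]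
        ring
      rw [sum_congr rfl hterm, ← Finset.sum_mul,
        isum M hM j w 1 (not_dvd_sub hj hwM (by omega)), zero_mul]
  rw [Finset.sum_congr rfl wrap0, Finset.sum_const, smul_zero, add_zero]
  by_cases hu0 : u = 0
  · -- u = 0 : use the transpose CCC
    subst hu0
    have h3 : ∀ j ∈ range M, ∀ n ∈ range (N-t),
        ∑ i ∈ range M, Bseq M N c k1 (i*(M*N)+(j*N+n)) *
          (starRingEnd ℂ) (Bseq M N c k2 ((i*(M*N)+(j*N+n)+τ) % (M*(M*N)))) =
        (M:ℂ) * (c j k1 n * (starRingEnd ℂ) (c j k2 (n+t))) := by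
      intro j hj n hn
      rw [mem_range] at hj hn
      have hterm : ∀ i ∈ range M,
          Bseq M N c k1 (i*(M*N)+(j*N+n)) *
            (starRingEnd ℂ) (Bseq M N c k2 ((i*(M*N)+(j*N+n)+τ) % (M*(M*N)))) =
          (om M ^ (i*j) * (starRingEnd ℂ) (om M ^ (i*j))) *
            (c j k1 n * (starRingEnd ℂ) (c j k2 (n+t))) := by
        intro i _
        have harg2 : i*(M*N)+(j*N+n)+τ = i*(M*N)+j*N+(n+t) := by
          rw [hτeq]
          ring
        rw [harg2, show i*(M*N)+(j*N+n) = i*(M*N)+j*N+n by ring,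
          Bval M N hM hN c k1 i j n hj (by omega),
          BvalMod M N hM hN c k2 i j (n+t) hj (by omega), _root_.map_mul]
        ring
      rw [sum_congr rfl hterm, ← Finset.sum_mul, isum_diag M j]
    rw [Finset.sum_congr rfl (fun j hj => Finset.sum_congr rfl (h3 j hj))]
    have h4 : ∑ j ∈ range M, ∑ n ∈ range (N-t),
        (M:ℂ) * (c j k1 n * (starRingEnd ℂ) (c j k2 (n+t)))
        = (M:ℂ) * ∑ j ∈ range M, aCorr (c j k1) (c j k2) N t := by
      rw [Finset.mul_sum]
      exact sum_congr rfl fun j _ => (Finset.mul_sum _ _ _).symm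
    rw [h4, hT k1 hk1 k2 hk2 t ht, if_neg (fun hc => hne ⟨hc.1, by omega⟩), mul_zero]
  · -- u ≥ 1 : orthogonality of the phases
    refine sum_eq_zero fun j hj => sum_eq_zero fun n hn => ?_
    rw [mem_range] at hj hn
    by_cases hb : j + u < M
    · have hterm : ∀ i ∈ range M,
          Bseq M N c k1 (i*(M*N)+(j*N+n)) *
            (starRingEnd ℂ) (Bseq M N c k2 ((i*(M*N)+(j*N+n)+τ) % (M*(M*N)))) =
          (om M ^ (i*j) * (starRingEnd ℂ) (om M ^ (i*(j+u)))) *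
            (c j k1 n * (starRingEnd ℂ) (c (j+u) k2 (n+t))) := by
        intro i _
        have harg2 : i*(M*N)+(j*N+n)+τ = i*(M*N)+(j+u)*N+(n+t) := by
          rw [hτeq]
          ring
        rw [harg2, show i*(M*N)+(j*N+n) = i*(M*N)+j*N+n by ring,
          Bval M N hM hN c k1 i j n hj (by omega),
          BvalMod M N hM hN c k2 i (j+u) (n+t) hb (by omega), _root_.map_mul]
        ring
      rw [sum_congr rfl hterm, ← Finset.sum_mul,
        isum0 M hM j (j+u) (not_dvd_sub hj hb (by omega)), zero_mul]
    · obtain ⟨w, hw⟩ : ∃ w, j+u = M+w := ⟨j+u-M, by omega⟩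
      have hwM : w < M := by omega
      have hterm : ∀ i ∈ range M,
          Bseq M N c k1 (i*(M*N)+(j*N+n)) *
            (starRingEnd ℂ) (Bseq M N c k2 ((i*(M*N)+(j*N+n)+τ) % (M*(M*N)))) =
          (om M ^ (i*j) * (starRingEnd ℂ) (om M ^ ((i+1)*w))) *
            (c j k1 n * (starRingEnd ℂ) (c w k2 (n+t))) := by
        intro i _
        have harg2 : i*(M*N)+(j*N+n)+τ = (i+1)*(M*N)+w*N+(n+t) := by
          have hstep : i*(M*N)+(j*N+n)+τ = i*(M*N)+(j+u)*N+(n+t) := by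
            rw [hτeq]
            ring
          rw [hstep, hw]
          ring
        rw [harg2, show i*(M*N)+(j*N+n) = i*(M*N)+j*N+n by ring,
          Bval M N hM hN c k1 i j n hj (by omega),
          BvalMod M N hM hN c k2 (i+1) w (n+t) hwM (by omega), _root_.map_mul]
        ring
      rw [sum_congr rfl hterm, ← Finset.sum_mul,
        isum M hM j w 1 (not_dvd_sub hj hwM (by omega)), zero_mul]

lemma isum_partial (M v j : ℕ) :
    ∑ i ∈ range (M-v), om M^(i*j) * (starRingEnd ℂ) (om M^((i+v)*j))
      = ((M-v:ℕ):ℂ) * om M^(-((v*j:ℕ):ℤ)) := by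
  have h1 : ∀ i ∈ range (M-v), om M^(i*j) * (starRingEnd ℂ) (om M^((i+v)*j))
      = om M^(-((v*j:ℕ):ℤ)) := fun i _ => by
    rw [conj_om_pow, ← zpow_natCast (om M) (i*j), ← zpow_add₀ (om_ne M)]
    congr 1
    push_cast
    ring
  rw [sum_congr rfl h1, sum_const, card_range, nsmul_eq_mul]

lemma factor_sum (A B C : ℕ) (P : ℕ → ℂ) (Q : ℕ → ℕ → ℂ) :
    ∑ n ∈ range A, ∑ i ∈ range B, ∑ k ∈ range C, (P i * Q k n)
    = (∑ i ∈ range B, P i) * ∑ k ∈ range C, ∑ n ∈ range A, Q k n := by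
  calc ∑ n ∈ range A, ∑ i ∈ range B, ∑ k ∈ range C, (P i * Q k n)
      = ∑ n ∈ range A, (∑ i ∈ range B, P i) * (∑ k ∈ range C, Q k n) :=
        sum_congr rfl fun n _ => (Finset.sum_mul_sum _ _ _ _).symm
    _ = (∑ i ∈ range B, P i) * ∑ n ∈ range A, ∑ k ∈ range C, Q k n := by
        rw [← Finset.mul_sum]
    _ = _ := by rw [Finset.sum_comm]

lemma main_acorr (M N : ℕ) (hM : 0 < M) (hN : 0 < N) (c : ℕ → ℕ → ℕ → ℂ)
    (hCCC : ∀ k1 < M, ∀ k2 < M, ∀ τ < N,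
      ∑ m ∈ Finset.range M, aCorr (c k1 m) (c k2 m) N τ =
        if k1 = k2 ∧ τ = 0 then (M * N : ℂ) else 0)
    (τ : ℕ) (hτ1 : 1 ≤ τ) (hτ2 : τ ≤ M^2*N - 1) :
    ∑ k ∈ Finset.range M, aCorr (Bseq M N c k) (Bseq M N c k) (M^2*N) τ = 0 := by
  have hMN : 0 < M*N := Nat.mul_pos hM hN
  have hL : 0 < M*(M*N) := Nat.mul_pos hM hMN
  have hτL : τ < M*(M*N) := by
    have h1 : M^2*N = M*(M*N) := by ring
    omega
  obtain ⟨v, u, t, hτeq, hv, hu, ht⟩ :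
      ∃ v u t, τ = v*(M*N)+u*N+t ∧ v < M ∧ u < M ∧ t < N := by
    refine ⟨τ/(M*N), (τ%(M*N))/N, τ%N, ?_, ?_, ?_, Nat.mod_lt _ hN⟩
    · have e1 := Nat.div_add_mod τ (M*N)
      have e2 := Nat.div_add_mod (τ % (M*N)) N
      have e3 : τ % (M*N) % N = τ % N := Nat.mod_mod_of_dvd τ ⟨M, by ring⟩
      have e4 : (τ/(M*N))*(M*N) = (M*N)*(τ/(M*N)) := by ring
      have e5 : ((τ%(M*N))/N)*N = N*((τ%(M*N))/N) := by ring
      omega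
    · rw [Nat.div_lt_iff_lt_mul hMN]
      omega
    · rw [Nat.div_lt_iff_lt_mul hN]
      exact Nat.mod_lt _ hMN
  rw [show M^2*N = M*(M*N) by ring]
  simp only [aCorr]
  have hsubset : ∀ (F : ℕ → ℂ), ∑ p ∈ range (M*(M*N)-τ), F p
      = ∑ p ∈ range (M*(M*N)), (if p+τ < M*(M*N) then F p else 0) := fun F => by
    calc ∑ p ∈ range (M*(M*N)-τ), F p
        = ∑ p ∈ range (M*(M*N)-τ), (if p+τ < M*(M*N) then F p else 0) :=
          sum_congr rfl fun p hp => (if_pos (by rw [mem_range] at hp; omega)).symm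
      _ = ∑ p ∈ range (M*(M*N)), (if p+τ < M*(M*N) then F p else 0) :=
          Finset.sum_subset (Finset.range_subset_range.mpr (by omega))
            (fun x hx hnx => by
              rw [mem_range] at hx hnx
              rw [if_neg]
              omega)
  rw [Finset.sum_congr rfl (fun k _ => hsubset _)]
  rw [Finset.sum_congr rfl (fun k _ => sum_block M (M*N) _)]
  rw [Finset.sum_congr rfl (fun k _ => Finset.sum_congr rfl (fun i _ => sum_block M N _))]
  -- reorder : k innermost, j outermost, then n, then i
  rw [Finset.sum_comm]
  rw [Finset.sum_congr rfl (fun i _ => Finset.sum_comm)]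
  rw [Finset.sum_comm]
  rw [Finset.sum_congr rfl (fun j _ => Finset.sum_congr rfl (fun i _ => Finset.sum_comm))]
  rw [Finset.sum_congr rfl (fun j _ => Finset.sum_comm)]
  have hsplitN : ∀ F : ℕ → ℂ, ∑ n ∈ range N, F n
      = ∑ n ∈ range (N-t), F n + ∑ m ∈ range t, F ((N-t)+m) := fun F => by
    conv_lhs => rw [show N = (N-t)+t from by omega]
    exact sum_range_add F (N-t) t
  have hsplit_all : ∀ (G : ℕ → ℕ → ℂ), ∑ j ∈ range M, ∑ n ∈ range N, G j n
      = (∑ j ∈ range M, ∑ n ∈ range (N-t), G j n)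
        + ∑ j ∈ range M, ∑ m ∈ range t, G j ((N-t)+m) := fun G => by
    rw [← sum_add_distrib]
    exact sum_congr rfl fun j _ => hsplitN (G j)
  rw [hsplit_all]
  have wrapz : ∀ j ∈ range M, ∑ m ∈ range t, ∑ i ∈ range M, ∑ k ∈ range M,
      (if i*(M*N)+(j*N+((N-t)+m))+τ < M*(M*N) then
        Bseq M N c k (i*(M*N)+(j*N+((N-t)+m))) *
          (starRingEnd ℂ) (Bseq M N c k (i*(M*N)+(j*N+((N-t)+m))+τ)) else 0) = 0 := by
    intro j hj
    rw [mem_range] at hj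
    rcases Nat.eq_zero_or_pos t with ht0 | ht0
    · subst ht0
      simp
    obtain ⟨s, hs⟩ : ∃ s, N = s + t := ⟨N-t, by omega⟩
    have hNts : N - t = s := by omega
    by_cases hb : j+u+1 < M
    · have hterm : ∀ m ∈ range t, ∀ i ∈ range M, ∀ k ∈ range M,
          (if i*(M*N)+(j*N+((N-t)+m))+τ < M*(M*N) then
            Bseq M N c k (i*(M*N)+(j*N+((N-t)+m))) *
              (starRingEnd ℂ) (Bseq M N c k (i*(M*N)+(j*N+((N-t)+m))+τ)) else 0)
          = (if i < M-v then om M^(i*j) * (starRingEnd ℂ) (om M^((i+v)*(j+u+1))) else 0)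
            * (c j k ((N-t)+m) * (starRingEnd ℂ) (c (j+u+1) k m)) := by
        intro m hm i _ k _
        rw [mem_range] at hm
        have harg : i*(M*N)+(j*N+((N-t)+m))+τ = (i+v)*(M*N)+(j+u+1)*N+m := by
          rw [hτeq, hNts, hs]
          ring
        rw [harg, show i*(M*N)+(j*N+((N-t)+m)) = i*(M*N)+j*N+((N-t)+m) by ring,
          Bval M N hM hN c k i j ((N-t)+m) hj (by omega),
          Bval M N hM hN c k (i+v) (j+u+1) m hb (by omega), _root_.map_mul]
        by_cases hcond : i < M - v
        · rw [if_pos ((blt hN (i+v) (j+u+1) m hb (by omega)).mpr (by omega)), if_pos hcond]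
          ring
        · rw [if_neg (fun hcc => hcond
              (by have := (blt hN (i+v) (j+u+1) m hb (by omega)).mp hcc; omega)),
            if_neg hcond, zero_mul]
      rw [Finset.sum_congr rfl (fun m hm => Finset.sum_congr rfl (fun i hi =>
        Finset.sum_congr rfl (fun k hk => hterm m hm i hi k hk))), factor_sum t M M _ _]
      have h0 := hCCC (j+u+1) hb j hj (N-t) (by omega)
      rw [if_neg (by rintro ⟨h1, h2⟩; omega)] at h0
      have h1 : ∑ k ∈ range M, ∑ m ∈ range t,
          (c j k ((N-t)+m) * (starRingEnd ℂ) (c (j+u+1) k m))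
          = (starRingEnd ℂ) (∑ k ∈ range M, aCorr (c (j+u+1) k) (c j k) N (N-t)) := by
        rw [map_sum]
        refine sum_congr rfl fun k _ => ?_
        rw [show aCorr (c (j+u+1) k) (c j k) N (N-t)
            = ∑ x ∈ range (N-(N-t)), c (j+u+1) k x * (starRingEnd ℂ) (c j k (x+(N-t)))
            from rfl, map_sum, show N-(N-t) = t from by omega]
        refine sum_congr rfl fun m _ => ?_
        rw [_root_.map_mul, Complex.conj_conj, Nat.add_comm (N-t) m]
        ring
      rw [h1, h0, map_zero, mul_zero]
    · obtain ⟨w, hw⟩ : ∃ w, j+u+1 = M+w := ⟨j+u+1-M, by omega⟩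
      have hwM : w < M := by omega
      have hterm : ∀ m ∈ range t, ∀ i ∈ range M, ∀ k ∈ range M,
          (if i*(M*N)+(j*N+((N-t)+m))+τ < M*(M*N) then
            Bseq M N c k (i*(M*N)+(j*N+((N-t)+m))) *
              (starRingEnd ℂ) (Bseq M N c k (i*(M*N)+(j*N+((N-t)+m))+τ)) else 0)
          = (if i < M-(v+1) then om M^(i*j) * (starRingEnd ℂ) (om M^((i+(v+1))*w)) else 0)
            * (c j k ((N-t)+m) * (starRingEnd ℂ) (c w k m)) := by
        intro m hm i _ k _
        rw [mem_range] at hm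
        have harg : i*(M*N)+(j*N+((N-t)+m))+τ = (i+(v+1))*(M*N)+w*N+m := by
          have hstep : i*(M*N)+(j*N+((N-t)+m))+τ = i*(M*N)+(j+u+1)*N+m+v*(M*N) := by
            rw [hτeq, hNts, hs]
            ring
          rw [hstep, hw]
          ring
        rw [harg, show i*(M*N)+(j*N+((N-t)+m)) = i*(M*N)+j*N+((N-t)+m) by ring,
          Bval M N hM hN c k i j ((N-t)+m) hj (by omega),
          Bval M N hM hN c k (i+(v+1)) w m hwM (by omega), _root_.map_mul]
        by_cases hcond : i < M - (v+1)
        · rw [if_pos ((blt hN (i+(v+1)) w m hwM (by omega)).mpr (by omega)), if_pos hcond]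
          ring
        · rw [if_neg (fun hcc => hcond
              (by have := (blt hN (i+(v+1)) w m hwM (by omega)).mp hcc; omega)),
            if_neg hcond, zero_mul]
      rw [Finset.sum_congr rfl (fun m hm => Finset.sum_congr rfl (fun i hi =>
        Finset.sum_congr rfl (fun k hk => hterm m hm i hi k hk))), factor_sum t M M _ _]
      have h0 := hCCC w hwM j hj (N-t) (by omega)
      rw [if_neg (by rintro ⟨h1, h2⟩; omega)] at h0
      have h1 : ∑ k ∈ range M, ∑ m ∈ range t,
          (c j k ((N-t)+m) * (starRingEnd ℂ) (c w k m))
          = (starRingEnd ℂ) (∑ k ∈ range M, aCorr (c w k) (c j k) N (N-t)) := by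
        rw [map_sum]
        refine sum_congr rfl fun k _ => ?_
        rw [show aCorr (c w k) (c j k) N (N-t)
            = ∑ x ∈ range (N-(N-t)), c w k x * (starRingEnd ℂ) (c j k (x+(N-t)))
            from rfl, map_sum, show N-(N-t) = t from by omega]
        refine sum_congr rfl fun m _ => ?_
        rw [_root_.map_mul, Complex.conj_conj, Nat.add_comm (N-t) m]
        ring
      rw [h1, h0, map_zero, mul_zero]
  rw [Finset.sum_congr rfl wrapz, Finset.sum_const, smul_zero, add_zero]
  by_cases hsurv : u = 0 ∧ t = 0
  · obtain ⟨rfl, rfl⟩ := hsurv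
    have hv1 : 1 ≤ v := by
      rcases Nat.eq_zero_or_pos v with h | h
      · subst h
        omega
      · omega
    have hjval : ∀ j ∈ range M, ∑ n ∈ range (N-0), ∑ i ∈ range M, ∑ k ∈ range M,
        (if i*(M*N)+(j*N+n)+τ < M*(M*N) then
          Bseq M N c k (i*(M*N)+(j*N+n)) *
            (starRingEnd ℂ) (Bseq M N c k (i*(M*N)+(j*N+n)+τ)) else 0)
        = ((M-v:ℕ):ℂ) * om M^(-((v*j:ℕ):ℤ)) * ((M:ℂ)*(N:ℂ)) := by
      intro j hj
      rw [mem_range] at hj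
      have hterm : ∀ n ∈ range (N-0), ∀ i ∈ range M, ∀ k ∈ range M,
          (if i*(M*N)+(j*N+n)+τ < M*(M*N) then
            Bseq M N c k (i*(M*N)+(j*N+n)) *
              (starRingEnd ℂ) (Bseq M N c k (i*(M*N)+(j*N+n)+τ)) else 0)
          = (if i < M-v then om M^(i*j) * (starRingEnd ℂ) (om M^((i+v)*j)) else 0)
            * (c j k n * (starRingEnd ℂ) (c j k n)) := by
        intro n hn i _ k _
        rw [mem_range] at hn
        have harg : i*(M*N)+(j*N+n)+τ = (i+v)*(M*N)+j*N+n := by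
          rw [hτeq]
          ring
        rw [harg, show i*(M*N)+(j*N+n) = i*(M*N)+j*N+n by ring,
          Bval M N hM hN c k i j n hj (by omega),
          Bval M N hM hN c k (i+v) j n hj (by omega), _root_.map_mul]
        by_cases hcond : i < M - v
        · rw [if_pos ((blt hN (i+v) j n hj (by omega)).mpr (by omega)), if_pos hcond]
          ring
        · rw [if_neg (fun hcc => hcond
              (by have := (blt hN (i+v) j n hj (by omega)).mp hcc; omega)),
            if_neg hcond, zero_mul]
      rw [Finset.sum_congr rfl (fun n hn => Finset.sum_congr rfl (fun i hi =>
        Finset.sum_congr rfl (fun k hk => hterm n hn i hi k hk))), factor_sum (N-0) M M _ _]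
      have hP : ∑ i ∈ range M,
          (if i < M-v then om M^(i*j) * (starRingEnd ℂ) (om M^((i+v)*j)) else 0)
          = ((M-v:ℕ):ℂ) * om M^(-((v*j:ℕ):ℤ)) := by
        rw [sum_ite_lt (M-v) M (by omega), isum_partial M v j]
      have hQ : ∑ k ∈ range M, ∑ n ∈ range (N-0),
          (c j k n * (starRingEnd ℂ) (c j k n)) = (M:ℂ)*(N:ℂ) := by
        have h0 := hCCC j hj j hj 0 hN
        rw [if_pos ⟨rfl, rfl⟩] at h0
        exact h0
      rw [hP, hQ]
    rw [Finset.sum_congr rfl hjval]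
    have hstep : ∀ j ∈ range M, ((M-v:ℕ):ℂ) * om M^(-((v*j:ℕ):ℤ)) * ((M:ℂ)*(N:ℂ))
        = (((M-v:ℕ):ℂ) * ((M:ℂ)*(N:ℂ))) * (om M^(-(v:ℤ)))^j := fun j _ => by
      rw [← zpow_natCast (om M ^ (-(v:ℤ))) j, ← _root_.zpow_mul,
        show (-(v:ℤ))*(j:ℤ) = -((v*j:ℕ):ℤ) by push_cast; ring]
      ring
    rw [Finset.sum_congr rfl hstep, ← Finset.mul_sum,
      geom_prim (om_prim M hM) (show ¬((M:ℤ) ∣ -(v:ℤ)) from not_dvd_of_lt (by omega) (by omega)),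
      mul_zero]
  · refine sum_eq_zero fun j hj => ?_
    rw [mem_range] at hj
    by_cases hb : j+u < M
    · have hterm : ∀ n ∈ range (N-t), ∀ i ∈ range M, ∀ k ∈ range M,
          (if i*(M*N)+(j*N+n)+τ < M*(M*N) then
            Bseq M N c k (i*(M*N)+(j*N+n)) *
              (starRingEnd ℂ) (Bseq M N c k (i*(M*N)+(j*N+n)+τ)) else 0)
          = (if i < M-v then om M^(i*j) * (starRingEnd ℂ) (om M^((i+v)*(j+u))) else 0)
            * (c j k n * (starRingEnd ℂ) (c (j+u) k (n+t))) := by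
        intro n hn i _ k _
        rw [mem_range] at hn
        have harg : i*(M*N)+(j*N+n)+τ = (i+v)*(M*N)+(j+u)*N+(n+t) := by
          rw [hτeq]
          ring
        rw [harg, show i*(M*N)+(j*N+n) = i*(M*N)+j*N+n by ring,
          Bval M N hM hN c k i j n hj (by omega),
          Bval M N hM hN c k (i+v) (j+u) (n+t) hb (by omega), _root_.map_mul]
        by_cases hcond : i < M - v
        · rw [if_pos ((blt hN (i+v) (j+u) (n+t) hb (by omega)).mpr (by omega)), if_pos hcond]
          ring
        · rw [if_neg (fun hcc => hcond
              (by have := (blt hN (i+v) (j+u) (n+t) hb (by omega)).mp hcc; omega)),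
            if_neg hcond, zero_mul]
      rw [Finset.sum_congr rfl (fun n hn => Finset.sum_congr rfl (fun i hi =>
        Finset.sum_congr rfl (fun k hk => hterm n hn i hi k hk))), factor_sum (N-t) M M _ _]
      have h0 := hCCC j hj (j+u) hb t ht
      rw [if_neg (fun hc => hsurv ⟨by omega, hc.2⟩)] at h0
      have h0' : ∑ k ∈ range M, ∑ n ∈ range (N-t),
          (c j k n * (starRingEnd ℂ) (c (j+u) k (n+t))) = 0 := h0
      rw [h0', mul_zero]
    · obtain ⟨w, hw⟩ : ∃ w, j+u = M+w := ⟨j+u-M, by omega⟩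
      have hwM : w < M := by omega
      have hterm : ∀ n ∈ range (N-t), ∀ i ∈ range M, ∀ k ∈ range M,
          (if i*(M*N)+(j*N+n)+τ < M*(M*N) then
            Bseq M N c k (i*(M*N)+(j*N+n)) *
              (starRingEnd ℂ) (Bseq M N c k (i*(M*N)+(j*N+n)+τ)) else 0)
          = (if i < M-(v+1) then om M^(i*j) * (starRingEnd ℂ) (om M^((i+(v+1))*w)) else 0)
            * (c j k n * (starRingEnd ℂ) (c w k (n+t))) := by
        intro n hn i _ k _
        rw [mem_range] at hn
        have harg : i*(M*N)+(j*N+n)+τ = (i+(v+1))*(M*N)+w*N+(n+t) := by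
          have hstep : i*(M*N)+(j*N+n)+τ = i*(M*N)+(j+u)*N+(n+t)+v*(M*N) := by
            rw [hτeq]
            ring
          rw [hstep, hw]
          ring
        rw [harg, show i*(M*N)+(j*N+n) = i*(M*N)+j*N+n by ring,
          Bval M N hM hN c k i j n hj (by omega),
          Bval M N hM hN c k (i+(v+1)) w (n+t) hwM (by omega), _root_.map_mul]
        by_cases hcond : i < M - (v+1)
        · rw [if_pos ((blt hN (i+(v+1)) w (n+t) hwM (by omega)).mpr (by omega)), if_pos hcond]
          ring
        · rw [if_neg (fun hcc => hcond
              (by have := (blt hN (i+(v+1)) w (n+t) hwM (by omega)).mp hcc; omega)),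
            if_neg hcond, zero_mul]
      rw [Finset.sum_congr rfl (fun n hn => Finset.sum_congr rfl (fun i hi =>
        Finset.sum_congr rfl (fun k hk => hterm n hn i hi k hk))), factor_sum (N-t) M M _ _]
      have h0 := hCCC j hj w hwM t ht
      rw [if_neg (by rintro ⟨h1, h2⟩; omega)] at h0
      have h0' : ∑ k ∈ range M, ∑ n ∈ range (N-t),
          (c j k n * (starRingEnd ℂ) (c w k (n+t))) = 0 := h0
      rw [h0', mul_zero]


theorem statement10 (M N : ℕ) (hM : 0 < M) (hN : 0 < N)
    (c : ℕ → ℕ → ℕ → ℂ)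
    (hCCC : ∀ k1 < M, ∀ k2 < M, ∀ τ < N,
      ∑ m ∈ Finset.range M, aCorr (c k1 m) (c k2 m) N τ =
        if k1 = k2 ∧ τ = 0 then (M * N : ℂ) else 0) :
    (∀ τ, 1 ≤ τ → τ ≤ M ^ 2 * N - 1 →
      ∑ k ∈ Finset.range M,
        aCorr (Bseq M N c k) (Bseq M N c k) (M ^ 2 * N) τ = 0) ∧
    (∀ k < M, ∀ τ, 1 ≤ τ → τ ≤ (M - 1) * N →
      pCorr (Bseq M N c k) (Bseq M N c k) (M ^ 2 * N) τ = 0) ∧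
    (∀ k1 < M, ∀ k2 < M, k1 ≠ k2 → ∀ τ, τ ≤ (M - 1) * N →
      pCorr (Bseq M N c k1) (Bseq M N c k2) (M ^ 2 * N) τ = 0) := by
  have hT := transpose_CCC M N hM hN c hCCC
  refine ⟨fun τ hτ1 hτ2 => main_acorr M N hM hN c hCCC τ hτ1 hτ2, ?_, ?_⟩
  · intro k hk τ hτ1 hτ2
    exact main_pcorr M N hM hN c hT k k τ hk hk hτ2 (fun hc => by omega)
  · intro k1 hk1 k2 hk2 hne τ hτ
    exact main_pcorr M N hM hN c hT k1 k2 τ hk1 hk2 hτ (fun hc => hne hc.1)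
end
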